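/- arXiv:2201.07419 — 14 statements merged into one kernel-verified Lean document; each statement's English description precedes it below -/
import Mathlib

section
/- An allocation A = (A_1, ..., A_n) of indivisible goods is envy-freeable (i.e., there exists a subsidy vector p ∈ ℝ_{≥0}^n such that v_i(A_i) + p_i ≥ v_i(A_j) + p_j for all agents i, j) if and only if A maximizes social welfare across all reassignments of its bundles: for every permutation σ of [n], ∑_i v_i(A_i) ≥ ∑_i v_i(A_{σ(i)}). -/
namespace EFaux

variable {n : ℕ}

/-- Prepend a vertex to a walk. -/
def prependWalk (i : Fin n) (g : ℕ → Fin n) : ℕ → Fin n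
  | 0 => i
  | (t+1) => g t

/-- Splice out the segment between positions `a` and `b` of a walk. -/
def spliceFun (f : ℕ → Fin n) (a d : ℕ) (t : ℕ) : Fin n :=
  if t ≤ a then f t else f (t + d)

lemma prepend_sum (c : Fin n → Fin n → ℝ) (i : Fin n) (g : ℕ → Fin n) (k : ℕ) :
    ∑ t ∈ Finset.range (k+1),
        c (prependWalk i g t) (prependWalk i g (t+1))
      = c i (g 0) + ∑ t ∈ Finset.range k, c (g t) (g (t+1)) := by
  rw [Finset.sum_range_succ']
  simp only [prependWalk]
  ring

lemma splice_sum (c : Fin n → Fin n → ℝ) (f : ℕ → Fin n) {a b k : ℕ}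
    (hab : a < b) (hbk : b ≤ k) (hf : f a = f b) :
    ∑ t ∈ Finset.range k, c (f t) (f (t+1)) =
      (∑ t ∈ Finset.range (k - (b-a)),
        c (spliceFun f a (b-a) t) (spliceFun f a (b-a) (t+1)))
      + ∑ t ∈ Finset.range (b-a), c (f (a+t)) (f (a+(t+1))) := by
  have hak : a ≤ k - (b - a) := by omega
  have h2 : ∑ t ∈ Finset.range (b-a), c (f (a+t)) (f (a+(t+1)))
      = ∑ t ∈ Finset.Ico a b, c (f t) (f (t+1)) := by
    rw [Finset.sum_Ico_eq_sum_range]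
    apply Finset.sum_congr rfl
    intro t _
    congr 2 <;> omega
  have h3 : ∑ t ∈ Finset.range (k - (b-a)),
      c (spliceFun f a (b-a) t) (spliceFun f a (b-a) (t+1))
      = (∑ t ∈ Finset.Ico 0 a, c (f t) (f (t+1)))
        + ∑ t ∈ Finset.Ico b k, c (f t) (f (t+1)) := by
    rw [Finset.range_eq_Ico,
      ← Finset.sum_Ico_consecutive _ (Nat.zero_le a) hak]
    congr 1
    · apply Finset.sum_congr rfl
      intro t ht
      have ht' : t < a := (Finset.mem_Ico.1 ht).2
      simp only [spliceFun, if_pos (le_of_lt ht'), if_pos (by omega : t + 1 ≤ a)]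
    · have key : ∀ t ∈ Finset.Ico a (k - (b-a)),
          c (spliceFun f a (b-a) t) (spliceFun f a (b-a) (t+1))
            = c (f (t + (b-a))) (f (t + (b-a) + 1)) := by
        intro t ht
        have h1 := (Finset.mem_Ico.1 ht).1
        simp only [spliceFun, if_neg (by omega : ¬ t + 1 ≤ a)]
        have e1 : t + 1 + (b-a) = t + (b-a) + 1 := by omega
        rw [e1]
        by_cases heq : t ≤ a
        · have hta : t = a := le_antisymm heq h1
          rw [if_pos heq, hta]
          have e2 : a + (b-a) = b := by omega
          rw [e2, hf]
        · rw [if_neg heq]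
      rw [Finset.sum_congr rfl key, Finset.sum_Ico_eq_sum_range,
        Finset.sum_Ico_eq_sum_range]
      have hk : k - (b-a) - a = k - b := by omega
      rw [hk]
      apply Finset.sum_congr rfl
      intro t _
      congr 2 <;> omega
  rw [h2, h3, Finset.range_eq_Ico,
    ← Finset.sum_Ico_consecutive (fun t => c (f t) (f (t+1))) (Nat.zero_le a)
      (le_of_lt (lt_of_lt_of_le hab hbk)),
    ← Finset.sum_Ico_consecutive (fun t => c (f t) (f (t+1))) (le_of_lt hab) hbk]
  ring

/-- Every closed walk in the envy graph has nonpositive weight. -/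
lemma cycle_nonpos (c : Fin n → Fin n → ℝ) (hcc : ∀ i, c i i = 0)
    (hperm : ∀ σ : Equiv.Perm (Fin n), ∑ i, c i (σ i) ≤ 0) :
    ∀ k (f : ℕ → Fin n), f k = f 0 →
      ∑ t ∈ Finset.range k, c (f t) (f (t+1)) ≤ 0 := by
  intro k
  induction k using Nat.strong_induction_on with
  | _ k IH =>
  intro f hclosed
  rcases Nat.eq_zero_or_pos k with rfl | hk
  · simp
  by_cases hinj : ∀ s < k, ∀ t < k, f s = f t → s = t
  · -- f is injective on `range k`; build the cyclic permutation
    set l : List (Fin n) := (List.range k).map f with hl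
    have hlen : l.length = k := by simp [hl]
    have hnd : l.Nodup := by
      apply List.Nodup.map_on _ List.nodup_range
      intro x hx y hy hxy
      exact hinj x (List.mem_range.1 hx) y (List.mem_range.1 hy) hxy
    set σ := l.formPerm with hσ
    have hget : ∀ t (ht : t < k), l[t]'(by omega) = f t := by
      intro t ht
      simp [hl]
    have happly : ∀ t < k, σ (f t) = f (t+1) := by
      intro t ht
      have h1 := List.formPerm_apply_getElem l hnd t (by omega)
      rw [hget t ht] at h1
      rw [hσ, h1]
      rcases Nat.lt_or_ge (t+1) k with h | h
      · have : (t + 1) % l.length = t + 1 := by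
          rw [hlen]; exact Nat.mod_eq_of_lt h
        simp only [this]
        exact hget (t+1) h
      · have htk : t + 1 = k := by omega
        have : (t + 1) % l.length = 0 := by rw [hlen, htk, Nat.mod_self]
        simp only [this]
        rw [hget 0 hk, ← hclosed, htk]
    have hmem : ∀ x : Fin n, x ∈ l ↔ x ∈ (Finset.range k).image f := by
      intro x
      simp [hl]
    calc ∑ t ∈ Finset.range k, c (f t) (f (t+1))
        = ∑ t ∈ Finset.range k, c (f t) (σ (f t)) := by
          apply Finset.sum_congr rfl
          intro t ht
          rw [happly t (Finset.mem_range.1 ht)]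
      _ = ∑ i ∈ (Finset.range k).image f, c i (σ i) := by
          rw [Finset.sum_image]
          intro x hx y hy hxy
          exact hinj x (Finset.mem_range.1 hx) y (Finset.mem_range.1 hy) hxy
      _ = ∑ i, c i (σ i) := by
          apply Finset.sum_subset (Finset.subset_univ _)
          intro x _ hx
          rw [← hmem] at hx
          rw [hσ, List.formPerm_apply_of_notMem hx, hcc]
      _ ≤ 0 := hperm σ
  · -- a repeated vertex strictly inside the walk: splice
    push_neg at hinj
    obtain ⟨s, hs, t, ht, hfst, hst⟩ := hinj
    obtain ⟨a, b, hab, hbk, hfab⟩ : ∃ a b, a < b ∧ b < k ∧ f a = f b := by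
      rcases lt_or_gt_of_ne hst with h | h
      · exact ⟨s, t, h, ht, hfst⟩
      · exact ⟨t, s, h, hs, hfst.symm⟩
    rw [splice_sum c f hab (le_of_lt hbk) hfab]
    have h1 : ∑ t ∈ Finset.range (k - (b-a)),
        c (spliceFun f a (b-a) t) (spliceFun f a (b-a) (t+1)) ≤ 0 := by
      apply IH (k - (b-a)) (by omega)
      simp only [spliceFun, if_pos (Nat.zero_le a), if_neg (by omega : ¬ k - (b-a) ≤ a)]
      have : k - (b-a) + (b-a) = k := by omega
      rw [this, hclosed]
    have h2 : ∑ t ∈ Finset.range (b-a), c (f (a+t)) (f (a+(t+1))) ≤ 0 := by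
      apply IH (b-a) (by omega) (fun t => f (a+t))
      show f (a + (b-a)) = f (a + 0)
      have : a + (b-a) = b := by omega
      rw [this, Nat.add_zero, hfab]
    linarith

variable [NeZero n]

/-- `EFd c k i` is the maximum weight of a walk of length at most `k` starting at `i`. -/
noncomputable def EFd (c : Fin n → Fin n → ℝ) : ℕ → Fin n → ℝ
  | 0, _ => 0
  | (k+1), i => max (EFd c k i)
      (Finset.univ.sup' Finset.univ_nonempty (fun j => c i j + EFd c k j))

lemma EFd_mono (c : Fin n → Fin n → ℝ) {k k' : ℕ} (h : k ≤ k') (i : Fin n) :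
    EFd c k i ≤ EFd c k' i := by
  induction k' with
  | zero =>
    have hk : k = 0 := Nat.le_zero.1 h
    subst hk; exact le_rfl
  | succ k' IH =>
    rcases Nat.eq_or_lt_of_le h with rfl | h'
    · exact le_rfl
    · exact le_trans (IH (by omega)) (le_max_left _ _)

lemma EFd_nonneg (c : Fin n → Fin n → ℝ) (k : ℕ) (i : Fin n) : 0 ≤ EFd c k i :=
  EFd_mono c (Nat.zero_le k) i

lemma walk_le_EFd (c : Fin n → Fin n → ℝ) :
    ∀ (k : ℕ) (f : ℕ → Fin n),
      ∑ t ∈ Finset.range k, c (f t) (f (t+1)) ≤ EFd c k (f 0) := by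
  intro k
  induction k with
  | zero => intro f; simp [EFd]
  | succ k IH =>
    intro f
    rw [Finset.sum_range_succ']
    have h1 := IH (fun t => f (t+1))
    have h2 : c (f 0) (f 1) + EFd c k (f 1) ≤ EFd c (k+1) (f 0) := by
      refine le_trans (Finset.le_sup' (fun j => c (f 0) j + EFd c k j)
        (Finset.mem_univ (f 1))) (le_max_right _ _)
    linarith

lemma EFd_achieved (c : Fin n → Fin n → ℝ) :
    ∀ (k : ℕ) (i : Fin n), ∃ (k' : ℕ) (f : ℕ → Fin n), k' ≤ k ∧ f 0 = i ∧
      ∑ t ∈ Finset.range k', c (f t) (f (t+1)) = EFd c k i := by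
  intro k
  induction k with
  | zero =>
    intro i
    exact ⟨0, fun _ => i, le_rfl, rfl, by simp [EFd]⟩
  | succ k IH =>
    intro i
    rcases le_or_gt (Finset.univ.sup' Finset.univ_nonempty
        (fun j => c i j + EFd c k j)) (EFd c k i) with h | h
    · obtain ⟨k', f, hk', hf0, hsum⟩ := IH i
      refine ⟨k', f, le_trans hk' (Nat.le_succ k), hf0, ?_⟩
      rw [hsum]
      exact (max_eq_left h).symm
    · obtain ⟨j, _, hj⟩ := Finset.exists_mem_eq_sup' Finset.univ_nonempty
        (fun j => c i j + EFd c k j)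
      obtain ⟨k', g, hk', hg0, hsum⟩ := IH j
      refine ⟨k' + 1, prependWalk i g, by omega, rfl, ?_⟩
      rw [prepend_sum, hg0, hsum]
      have : EFd c (k+1) i = c i j + EFd c k j := by
        rw [show EFd c (k+1) i = max (EFd c k i)
          (Finset.univ.sup' Finset.univ_nonempty (fun j => c i j + EFd c k j)) from rfl,
          max_eq_right (le_of_lt h), hj]
      rw [this]

/-- Assuming all closed walks are nonpositive, every walk has weight at most
`EFd c (n-1)` of its start. -/
lemma walk_le_EFd_pred (c : Fin n → Fin n → ℝ)
    (hcyc : ∀ k (f : ℕ → Fin n), f k = f 0 →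
      ∑ t ∈ Finset.range k, c (f t) (f (t+1)) ≤ 0) :
    ∀ (k : ℕ) (f : ℕ → Fin n),
      ∑ t ∈ Finset.range k, c (f t) (f (t+1)) ≤ EFd c (n-1) (f 0) := by
  intro k
  induction k using Nat.strong_induction_on with
  | _ k IH =>
  intro f
  rcases le_or_gt k (n-1) with h | h
  · exact le_trans (walk_le_EFd c k f) (EFd_mono c h (f 0))
  · -- k ≥ n, so the first n+1 vertices contain a repeat
    have hn : 0 < n := Nat.pos_of_ne_zero (NeZero.ne n)
    have hkn : n ≤ k := by omega
    have : ¬ Function.Injective (fun t : Fin (n+1) => f t) := by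
      intro hi
      have := Fintype.card_le_of_injective _ hi
      simp at this
    rw [Function.not_injective_iff] at this
    obtain ⟨s, t, hfst, hst⟩ := this
    obtain ⟨a, b, hab, hbk, hfab⟩ : ∃ a b, a < b ∧ b ≤ k ∧ f a = f b := by
      rcases lt_or_gt_of_ne (fun h => hst (Fin.ext h)) with h' | h'
      · exact ⟨(s : ℕ), (t : ℕ), h', le_trans (by omega) hkn, hfst⟩
      · exact ⟨(t : ℕ), (s : ℕ), h', le_trans (by omega) hkn, hfst.symm⟩
    rw [splice_sum c f hab hbk hfab]
    have h2 : ∑ t ∈ Finset.range (b-a), c (f (a+t)) (f (a+(t+1))) ≤ 0 := by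
      apply hcyc (b-a) (fun t => f (a+t))
      show f (a + (b-a)) = f (a + 0)
      have : a + (b-a) = b := by omega
      rw [this, Nat.add_zero, hfab]
    have h1 : ∑ t ∈ Finset.range (k - (b-a)),
        c (spliceFun f a (b-a) t) (spliceFun f a (b-a) (t+1))
        ≤ EFd c (n-1) (spliceFun f a (b-a) 0) :=
      IH (k - (b-a)) (by omega) _
    have h0 : spliceFun f a (b-a) 0 = f 0 := by
      simp [spliceFun, Nat.zero_le a]
    rw [h0] at h1
    linarith

/-- Main construction: nonpositive cycles give a valid subsidy vector. -/
lemma exists_subsidy (c : Fin n → Fin n → ℝ) (hcc : ∀ i, c i i = 0)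
    (hperm : ∀ σ : Equiv.Perm (Fin n), ∑ i, c i (σ i) ≤ 0) :
    ∃ p : Fin n → ℝ, (∀ i, 0 ≤ p i) ∧ ∀ i j, c i j + p j ≤ p i := by
  have hcyc := cycle_nonpos c hcc hperm
  refine ⟨fun i => EFd c (n-1) i, fun i => EFd_nonneg c _ i, ?_⟩
  intro i j
  obtain ⟨k', g, hk', hg0, hsum⟩ := EFd_achieved c (n-1) j
  have := walk_le_EFd_pred c hcyc (k'+1) (prependWalk i g)
  rw [prepend_sum, hg0, hsum] at this
  simpa [prependWalk] using this

end EFaux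

/-- An allocation is envy-freeable (there exists a nonnegative subsidy
vector making it envy-free) iff it maximizes social welfare across all reassignments
of its bundles among the agents. -/
theorem envy_freeable_iff_welfare_maximizing {n m : ℕ}
    (v : Fin n → Finset (Fin m) → ℝ)
    (hnonneg : ∀ i S, 0 ≤ v i S)
    (hmono : ∀ i (S T : Finset (Fin m)), S ⊆ T → v i S ≤ v i T)
    (hempty : ∀ i, v i ∅ = 0)
    (A : Fin n → Finset (Fin m))
    (hdisj : ∀ i j, i ≠ j → Disjoint (A i) (A j)) :
    (∃ p : Fin n → ℝ, (∀ i, 0 ≤ p i) ∧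
        ∀ i j, v i (A j) + p j ≤ v i (A i) + p i) ↔
    (∀ σ : Equiv.Perm (Fin n), ∑ i, v i (A (σ i)) ≤ ∑ i, v i (A i)) := by
  constructor
  · rintro ⟨p, _, henv⟩ σ
    have h1 : ∀ i, v i (A (σ i)) + p (σ i) ≤ v i (A i) + p i := fun i => henv i (σ i)
    have h2 : ∑ i, (v i (A (σ i)) + p (σ i)) ≤ ∑ i, (v i (A i) + p i) :=
      Finset.sum_le_sum (fun i _ => h1 i)
    have h3 : ∑ i, p (σ i) = ∑ i, p i := Equiv.sum_comp σ p
    rw [Finset.sum_add_distrib, Finset.sum_add_distrib, h3] at h2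
    linarith
  · intro hwelf
    rcases Nat.eq_zero_or_pos n with rfl | hn
    · exact ⟨fun i => 0, fun i => le_rfl, fun i => i.elim0⟩
    haveI : NeZero n := ⟨Nat.pos_iff_ne_zero.1 hn⟩
    set c : Fin n → Fin n → ℝ := fun i j => v i (A j) - v i (A i) with hc
    have hcc : ∀ i, c i i = 0 := fun i => by simp [hc]
    have hperm : ∀ σ : Equiv.Perm (Fin n), ∑ i, c i (σ i) ≤ 0 := by
      intro σ
      have := hwelf σ
      simp only [hc, Finset.sum_sub_distrib]
      linarith
    obtain ⟨p, hp0, hp⟩ := EFaux.exists_subsidy c hcc hperm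
    refine ⟨p, hp0, fun i j => ?_⟩
    have := hp i j
    simp only [hc] at this
    linarith
end

section
/- An allocation A is envy-freeable if and only if its envy graph G_A contains no directed cycle of strictly positive total weight, where the envy graph is the complete weighted directed graph on the n agents with edge weight w_A(i,j) = v_i(A_j) − v_i(A_i). -/
/-- The weight of a directed walk (given as a list of vertices) in a complete
weighted digraph with edge weights `w`. -/
def walkWeight {n : ℕ} (w : Fin n → Fin n → ℝ) (L : List (Fin n)) : ℝ :=
  ((L.zip L.tail).map (fun e => w e.1 e.2)).sum

lemma walkWeight_cons_cons {n : ℕ} (w : Fin n → Fin n → ℝ) (a b : Fin n) (L : List (Fin n)) :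
    walkWeight w (a :: b :: L) = w a b + walkWeight w (b :: L) := by
  simp [walkWeight]

lemma walkWeight_split {n : ℕ} (w : Fin n → Fin n → ℝ) (y : Fin n) (Z : List (Fin n)) :
    ∀ X : List (Fin n),
      walkWeight w (X ++ y :: Z) = walkWeight w (X ++ [y]) + walkWeight w (y :: Z)
  | [] => by simp [walkWeight]
  | [a] => by simp [walkWeight_cons_cons, walkWeight]
  | a :: b :: X => by
      have h := walkWeight_split w y Z (b :: X)
      simp only [List.cons_append, walkWeight_cons_cons] at *
      rw [h]; ring

lemma walk_le_of_potential {n : ℕ} (w : Fin n → Fin n → ℝ) (p : Fin n → ℝ)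
    (hp : ∀ i j, w i j ≤ p i - p j) :
    ∀ (L : List (Fin n)) (a : Fin n),
      walkWeight w (a :: L) ≤ p a - p ((a :: L).getLast (by simp))
  | [], a => by simp [walkWeight, List.getLast]
  | b :: L, a => by
      rw [walkWeight_cons_cons]
      have h1 := walk_le_of_potential w p hp L b
      have h2 : ((a :: b :: L).getLast (by simp)) = ((b :: L).getLast (by simp)) :=
        List.getLast_cons (by simp)
      rw [h2]
      have := hp a b
      linarith

/-- An allocation is envy-freeable iff its envy graph (edge weight
`w_A(i,j) = v_i(A_j) - v_i(A_i)`) contains no directed cycle of strictly positive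
total weight. A cycle is given by a nonempty list of distinct vertices `i :: L`
(with `L ≠ []`), traversed and closed back to `i`. -/
theorem envy_freeable_iff_no_positive_cycle {n m : ℕ}
    (v : Fin n → Finset (Fin m) → ℝ)
    (A : Fin n → Finset (Fin m))
    (hdisj : ∀ i j, i ≠ j → Disjoint (A i) (A j)) :
    (∃ p : Fin n → ℝ, (∀ i, 0 ≤ p i) ∧
        ∀ i j, v i (A j) + p j ≤ v i (A i) + p i) ↔
    (∀ (i : Fin n) (L : List (Fin n)), L ≠ [] → (i :: L).Nodup →
        walkWeight (fun a b => v a (A b) - v a (A a)) (i :: (L ++ [i])) ≤ 0) := by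
  set w : Fin n → Fin n → ℝ := fun a b => v a (A b) - v a (A a) with hw
  constructor
  · rintro ⟨p, -, hp⟩ i L hL -
    have hp' : ∀ a b, w a b ≤ p a - p b := by
      intro a b; have := hp a b; simp only [hw]; linarith
    have hlast : ((i :: (L ++ [i])).getLast (by simp)) = i := by
      rw [List.getLast_cons (by simp)]
      simp [List.getLast_append]
    have := walk_le_of_potential w p hp' (L ++ [i]) i
    rw [hlast] at this
    linarith
  · intro hcyc
    set f : Fin n → { l : List (Fin n) // l.Nodup } → ℝ :=
      fun i L => if L.1.head? = some i then walkWeight w L.1 else 0 with hf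
    have hne : (Finset.univ : Finset { l : List (Fin n) // l.Nodup }).Nonempty :=
      ⟨⟨[], List.nodup_nil⟩, Finset.mem_univ _⟩
    set p : Fin n → ℝ := fun i => Finset.univ.sup' hne (f i) with hpdef
    have hp0 : ∀ i, 0 ≤ p i := by
      intro i
      have h1 : f i ⟨[], List.nodup_nil⟩ = 0 := by simp [hf]
      have h2 := Finset.le_sup' (f i)
        (Finset.mem_univ (⟨[], List.nodup_nil⟩ : { l : List (Fin n) // l.Nodup }))
      rw [h1] at h2
      exact h2
    have hle : ∀ (L : List (Fin n)) (h : L.Nodup) (i : Fin n), L.head? = some i →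
        walkWeight w L ≤ p i := by
      intro L h i hh
      have h1 : f i ⟨L, h⟩ = walkWeight w L := by simp [hf, hh]
      have h2 := Finset.le_sup' (f i)
        (Finset.mem_univ (⟨L, h⟩ : { l : List (Fin n) // l.Nodup }))
      rw [h1] at h2
      exact h2
    have key : ∀ i j, w i j + p j ≤ p i := by
      intro i j
      rcases eq_or_ne i j with rfl | hij
      · have h0 : w i i = 0 := by simp [hw]
        rw [h0, zero_add]
      · have hsup : p j ≤ p i - w i j := by
          refine Finset.sup'_le hne (f j) fun L _ => ?_
          show (if L.1.head? = some j then walkWeight w L.1 else 0) ≤ p i - w i j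
          split_ifs with hh
          · obtain ⟨L', hL'⟩ : ∃ L', L.1 = j :: L' := by
              cases hc : L.1 with
              | nil => rw [hc] at hh; simp at hh
              | cons a t =>
                  rw [hc] at hh
                  simp only [List.head?_cons, Option.some.injEq] at hh
                  exact ⟨t, by rw [hh]⟩
            by_cases hi : i ∈ L.1
            · obtain ⟨L1, L2, hsplit⟩ := List.append_of_mem hi
              have hnd := L.2
              rw [hsplit] at hnd
              have hL1nd : L1.Nodup := hnd.of_append_left
              have hiL2nd : (i :: L2).Nodup := hnd.of_append_right
              have hiL1 : i ∉ L1 := fun hmem =>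
                (List.disjoint_of_nodup_append hnd) hmem (List.mem_cons_self (a := i) (l := L2))
              have hL1ne : L1 ≠ [] := by
                intro h0
                rw [h0, List.nil_append, hL'] at hsplit
                simp only [List.cons.injEq] at hsplit
                exact hij hsplit.1.symm
              have hcycle : walkWeight w (i :: (L1 ++ [i])) ≤ 0 :=
                hcyc i L1 hL1ne (List.nodup_cons.mpr ⟨hiL1, hL1nd⟩)
              have hcycle' : walkWeight w ((i :: L1) ++ [i]) ≤ 0 := by
                simpa using hcycle
              have hpath : walkWeight w (i :: L2) ≤ p i := hle (i :: L2) hiL2nd i rfl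
              have heq : w i j + walkWeight w L.1 = walkWeight w (i :: L.1) := by
                rw [hL', walkWeight_cons_cons]
              have hc2 : i :: L.1 = (i :: L1) ++ (i :: L2) := by rw [hsplit]; simp
              have heq2 : walkWeight w (i :: L.1) =
                  walkWeight w ((i :: L1) ++ [i]) + walkWeight w (i :: L2) := by
                rw [hc2, walkWeight_split]
              linarith
            · have hnd : (i :: L.1).Nodup := List.nodup_cons.mpr ⟨hi, L.2⟩
              have hpath : walkWeight w (i :: L.1) ≤ p i := hle _ hnd i rfl
              have heq : walkWeight w (i :: L.1) = w i j + walkWeight w L.1 := by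
                rw [hL', walkWeight_cons_cons]
              linarith
          · have hnd : ([i, j] : List (Fin n)).Nodup := by simp [hij]
            have h1 : walkWeight w [i, j] ≤ p i := hle _ hnd i rfl
            have h2 : walkWeight w [i, j] = w i j := by simp [walkWeight]
            linarith
        linarith
    refine ⟨p, hp0, fun i j => ?_⟩
    have := key i j
    simp only [hw] at this
    linarith
end

section
/- For any envy-freeable allocation A, setting each agent i's subsidy to p*_i := ℓ_A(i), the maximum weight of any directed path in the envy graph G_A starting at vertex i (with the empty path of weight 0 allowed), yields an envy-free solution (A, p*). Moreover, for any other subsidy vector p ∈ ℝ_{≥0}^n such that (A, p) is envy-free, we have p*_i ≤ p_i for all i. -/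
/-! Envy-freeness of `(A, p)` says exactly that `p` is a potential for the envy graph:
`w a b ≤ p a - p b` for every edge. Summing along a path from `i`, any nonnegative potential
bounds every path weight from `i` by `p i`, which gives minimality of `ℓ`. A potential also
makes every cycle nonpositive, so for an edge `i → j` and a simple path `L` from `j`, either
`i :: L` is a simple path from `i`, or `L` passes through `i`; in the latter case the part of
`i :: L` before the second visit of `i` is a cycle, and dropping it leaves a simple path from
`i` that is at least as heavy. Either way `w i j + ℓ j ≤ ℓ i`, which is envy-freeness of
`(A, ℓ)`. -/

namespace walkWeight

variable {n : ℕ} (w : Fin n → Fin n → ℝ)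

lemma cons_cons (a b : Fin n) (L : List (Fin n)) :
    walkWeight w (a :: b :: L) = w a b + walkWeight w (b :: L) := rfl

lemma append_cons (X : List (Fin n)) (y : Fin n) (Z : List (Fin n)) :
    walkWeight w (X ++ y :: Z) = walkWeight w (X ++ [y]) + walkWeight w (y :: Z) := by
  induction X with
  | nil => simp [walkWeight]
  | cons a X ih =>
    cases X with
    | nil => simp [walkWeight]
    | cons b X => simp only [List.cons_append, cons_cons] at ih ⊢; rw [ih]; ring

lemma cons_le_sub_getLast {p : Fin n → ℝ} (hp : ∀ a b, w a b ≤ p a - p b)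
    (a : Fin n) (L : List (Fin n)) :
    walkWeight w (a :: L) ≤ p a - p ((a :: L).getLast (List.cons_ne_nil a L)) := by
  induction L generalizing a with
  | nil => simp [walkWeight]
  | cons b L ih =>
    rw [cons_cons, List.getLast_cons_cons]
    linarith [hp a b, ih b]

lemma cycle_nonpos {p : Fin n → ℝ} (hp : ∀ a b, w a b ≤ p a - p b)
    (a : Fin n) (L : List (Fin n)) : walkWeight w (a :: L ++ [a]) ≤ 0 := by
  have h := cons_le_sub_getLast w hp a (L ++ [a])
  simp only [← List.cons_append, List.getLast_append_singleton, sub_self] at h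
  exact h

end walkWeight

def simplePathWeights {n : ℕ} (w : Fin n → Fin n → ℝ) (i : Fin n) : Set ℝ :=
  {x | ∃ L : List (Fin n), L.Nodup ∧ (L = [] ∨ L.head? = some i) ∧ x = walkWeight w L}

namespace simplePathWeights

variable {n : ℕ} {w : Fin n → Fin n → ℝ}

lemma mem_iff {i : Fin n} {x : ℝ} :
    x ∈ simplePathWeights w i ↔ x = 0 ∨ ∃ M, (i :: M).Nodup ∧ x = walkWeight w (i :: M) := by
  constructor
  · rintro ⟨L, hnd, rfl | hhead, rfl⟩
    · exact Or.inl rfl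
    · obtain ⟨M, rfl⟩ := List.head?_eq_some_iff.mp hhead
      exact Or.inr ⟨M, hnd, rfl⟩
  · rintro (rfl | ⟨M, hnd, rfl⟩)
    · exact ⟨[], List.nodup_nil, Or.inl rfl, rfl⟩
    · exact ⟨i :: M, hnd, Or.inr rfl, rfl⟩

lemma le_of_potential {p : Fin n → ℝ} (hp : ∀ a b, w a b ≤ p a - p b) (hp0 : ∀ a, 0 ≤ p a)
    {i : Fin n} {x : ℝ} (hx : x ∈ simplePathWeights w i) : x ≤ p i := by
  rcases mem_iff.mp hx with rfl | ⟨M, -, rfl⟩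
  · exact hp0 i
  · linarith [walkWeight.cons_le_sub_getLast w hp i M,
      hp0 ((i :: M).getLast (List.cons_ne_nil i M))]

lemma exists_ge_edge_add {p : Fin n → ℝ} (hp : ∀ a b, w a b ≤ p a - p b)
    {i j : Fin n} (hij : i ≠ j) {x : ℝ} (hx : x ∈ simplePathWeights w j) :
    ∃ y ∈ simplePathWeights w i, w i j + x ≤ y := by
  rcases mem_iff.mp hx with rfl | ⟨M, hnd, rfl⟩
  · refine ⟨walkWeight w [i, j], mem_iff.mpr (Or.inr ⟨[j], by simp [hij], rfl⟩), ?_⟩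
    simp [walkWeight]
  by_cases hiM : i ∈ j :: M
  · obtain ⟨L₁, L₂, hsplit⟩ := List.append_of_mem hiM
    obtain ⟨L₁', rfl⟩ : ∃ L₁', L₁ = j :: L₁' := by
      cases L₁ with
      | nil => exact absurd (List.cons.inj hsplit).1 hij.symm
      | cons c L₁' => exact ⟨L₁', by rw [(List.cons.inj hsplit).1]⟩
    have hnd₂ : (i :: L₂).Nodup := hnd.sublist (hsplit ▸ List.sublist_append_right _ _)
    refine ⟨walkWeight w (i :: L₂), mem_iff.mpr (Or.inr ⟨L₂, hnd₂, rfl⟩), ?_⟩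
    have hcycle : w i j + walkWeight w (j :: L₁' ++ [i]) ≤ 0 :=
      walkWeight.cycle_nonpos w hp i (j :: L₁')
    rw [hsplit, walkWeight.append_cons]
    linarith
  · exact ⟨walkWeight w (i :: j :: M),
      mem_iff.mpr (Or.inr ⟨j :: M, List.nodup_cons.mpr ⟨hiM, hnd⟩, rfl⟩), le_rfl⟩

end simplePathWeights

theorem max_path_weight_subsidies_general {n m : ℕ}
    (v : Fin n → Finset (Fin m) → ℝ)
    (A : Fin n → Finset (Fin m))
    (hEFable : ∃ p : Fin n → ℝ, (∀ i, 0 ≤ p i) ∧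
        ∀ i j, v i (A j) + p j ≤ v i (A i) + p i)
    (ℓ : Fin n → ℝ)
    (hℓ : ∀ i, IsGreatest
        {x : ℝ | ∃ L : List (Fin n), L.Nodup ∧ (L = [] ∨ L.head? = some i) ∧
            x = walkWeight (fun a b => v a (A b) - v a (A a)) L} (ℓ i)) :
    (∀ i j, v i (A j) + ℓ j ≤ v i (A i) + ℓ i) ∧
    (∀ p : Fin n → ℝ, (∀ i, 0 ≤ p i) →
        (∀ i j, v i (A j) + p j ≤ v i (A i) + p i) → ∀ i, ℓ i ≤ p i) := by
  have potential_of_envyFree {p : Fin n → ℝ} (hp : ∀ i j, v i (A j) + p j ≤ v i (A i) + p i)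
      (a b : Fin n) : v a (A b) - v a (A a) ≤ p a - p b := by
    linarith [hp a b]
  obtain ⟨p₀, -, hp₀⟩ := hEFable
  refine ⟨fun i j => ?_, fun p hp0 hp i => ?_⟩
  · rcases eq_or_ne i j with rfl | hij
    · exact le_rfl
    obtain ⟨y, hy, hle⟩ := simplePathWeights.exists_ge_edge_add
      (potential_of_envyFree hp₀) hij (hℓ j).1
    linarith [(hℓ i).2 hy]
  · exact simplePathWeights.le_of_potential (potential_of_envyFree hp) hp0 (hℓ i).1

/-- For an envy-freeable allocation `A`, setting each agent `i`'s
subsidy to `ℓ i`, the maximum weight of a directed (simple) path in the envy graph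
starting at `i` (the empty path of weight 0 allowed), yields an envy-free solution
`(A, ℓ)`; moreover `ℓ` is pointwise minimal among all nonnegative subsidy vectors
realizing an envy-free solution with `A`. -/
theorem max_path_weight_subsidies {n m : ℕ}
    (v : Fin n → Finset (Fin m) → ℝ)
    (A : Fin n → Finset (Fin m))
    (hdisj : ∀ i j, i ≠ j → Disjoint (A i) (A j))
    (hEFable : ∃ p : Fin n → ℝ, (∀ i, 0 ≤ p i) ∧
        ∀ i j, v i (A j) + p j ≤ v i (A i) + p i)
    (ℓ : Fin n → ℝ)
    (hℓ : ∀ i, IsGreatest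
        {x : ℝ | ∃ L : List (Fin n), L.Nodup ∧ (L = [] ∨ L.head? = some i) ∧
            x = walkWeight (fun a b => v a (A b) - v a (A a)) L} (ℓ i)) :
    (∀ i j, v i (A j) + ℓ j ≤ v i (A i) + ℓ i) ∧
    (∀ p : Fin n → ℝ, (∀ i, 0 ≤ p i) →
        (∀ i j, v i (A j) + p j ≤ v i (A i) + p i) → ∀ i, ℓ i ≤ p i) :=
  max_path_weight_subsidies_general v A hEFable ℓ hℓ
end

section
/- Let (A, p) be an envy-free solution and σ a permutation of [n] such that the reassigned allocation B := A_σ (where agent i receives bundle A_{σ(i)}) is envy-freeable. Then (B, p_σ), where agent i receives subsidy p_{σ(i)}, is also an envy-free solution. -/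
/-!
Envy-freeness of `(A, p)` against bundle `σ i` says that each agent's utility can only drop when
bundles and subsidies are permuted by `σ`. Summed over all agents the subsidies cancel, and
since `A ∘ σ` has at least the welfare of `A`, no agent's utility drops at all. Hence every agent
is exactly as well off under `(A ∘ σ, p ∘ σ)` as under `(A, p)`, where it envied nobody.
-/

open Finset

def IsEnvyFree {ι β R : Type*} [Add R] [LE R] (v : ι → β → R) (A : ι → β) (p : ι → R) : Prop :=
  ∀ i j, v i (A j) + p j ≤ v i (A i) + p i

namespace IsEnvyFree

variable {ι β R : Type*} [Fintype ι] [AddCommMonoid R] [PartialOrder R]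
  [IsOrderedCancelAddMonoid R] {v : ι → β → R} {A : ι → β} {p : ι → R}

theorem utility_comp_perm_eq (h : IsEnvyFree v A p) (σ : Equiv.Perm ι)
    (hwelfare : ∑ i, v i (A i) ≤ ∑ i, v i (A (σ i))) (i : ι) :
    v i (A (σ i)) + p (σ i) = v i (A i) + p i := by
  have hle : ∀ i ∈ univ, v i (A (σ i)) + p (σ i) ≤ v i (A i) + p i := fun i _ => h i (σ i)
  have hsum : ∑ i, (v i (A (σ i)) + p (σ i)) = ∑ i, (v i (A i) + p i) := by
    refine le_antisymm (sum_le_sum hle) ?_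
    rw [sum_add_distrib, sum_add_distrib, Equiv.sum_comp σ p]
    exact add_le_add_left hwelfare _
  exact (sum_eq_sum_iff_of_le hle).mp hsum i (mem_univ i)

theorem comp_perm (h : IsEnvyFree v A p) (σ : Equiv.Perm ι)
    (hwelfare : ∑ i, v i (A i) ≤ ∑ i, v i (A (σ i))) :
    IsEnvyFree v (A ∘ σ) (p ∘ σ) := fun i j =>
  calc v i (A (σ j)) + p (σ j) ≤ v i (A i) + p i := h i (σ j)
    _ = v i (A (σ i)) + p (σ i) := (h.utility_comp_perm_eq σ hwelfare i).symm

end IsEnvyFree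

theorem reshuffle_preserves_envy_freeness_general {n m : ℕ}
    (v : Fin n → Finset (Fin m) → ℝ)
    (A : Fin n → Finset (Fin m))
    (p : Fin n → ℝ)
    (hEF : ∀ i j, v i (A j) + p j ≤ v i (A i) + p i)
    (σ : Equiv.Perm (Fin n))
    (hBfreeable : ∀ τ : Equiv.Perm (Fin n),
        ∑ i, v i (A (σ (τ i))) ≤ ∑ i, v i (A (σ i))) :
    ∀ i j, v i (A (σ j)) + p (σ j) ≤ v i (A (σ i)) + p (σ i) := by
  have hwelfare : ∑ i, v i (A i) ≤ ∑ i, v i (A (σ i)) := by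
    simpa using hBfreeable σ⁻¹
  exact IsEnvyFree.comp_perm hEF σ hwelfare

/-- If `(A, p)` is an envy-free solution and `σ` is a permutation such
that the reassigned allocation `B := A_σ` (agent `i` gets bundle `A (σ i)`) is
envy-freeable (here characterized as maximizing social welfare over all
reassignments of its bundles), then `(B, p_σ)` is also an envy-free solution. -/
theorem reshuffle_preserves_envy_freeness {n m : ℕ}
    (v : Fin n → Finset (Fin m) → ℝ)
    (A : Fin n → Finset (Fin m))
    (hdisj : ∀ i j, i ≠ j → Disjoint (A i) (A j))
    (p : Fin n → ℝ) (hp : ∀ i, 0 ≤ p i)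
    (hEF : ∀ i j, v i (A j) + p j ≤ v i (A i) + p i)
    (σ : Equiv.Perm (Fin n))
    (hBfreeable : ∀ τ : Equiv.Perm (Fin n),
        ∑ i, v i (A (σ (τ i))) ≤ ∑ i, v i (A (σ i))) :
    ∀ i j, v i (A (σ j)) + p (σ j) ≤ v i (A (σ i)) + p (σ i) :=
  reshuffle_preserves_envy_freeness_general v A p hEF σ hBfreeable
end

section
/- If (A, p) is an envy-free solution and σ is a permutation such that both A and A_σ are envy-freeable, then for every agent i the envy-freeness inequality toward σ(i) is tight: v_i(A_i) + p_i = v_i(A_{σ(i)}) + p_{σ(i)}. -/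
/-- If `(A, p)` is an envy-free solution and `σ` is a permutation such
that both `A` and `A_σ` are envy-freeable (each maximizes social welfare over all
reassignments of its bundles), then the envy-freeness inequality of every agent `i`
toward `σ i` is tight: `v_i(A_i) + p_i = v_i(A_{σ(i)}) + p_{σ(i)}`. -/
theorem envy_inequality_tight {n m : ℕ}
    (v : Fin n → Finset (Fin m) → ℝ)
    (A : Fin n → Finset (Fin m))
    (hdisj : ∀ i j, i ≠ j → Disjoint (A i) (A j))
    (p : Fin n → ℝ) (hp : ∀ i, 0 ≤ p i)
    (hEF : ∀ i j, v i (A j) + p j ≤ v i (A i) + p i)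
    (σ : Equiv.Perm (Fin n))
    (hAfreeable : ∀ τ : Equiv.Perm (Fin n),
        ∑ i, v i (A (τ i)) ≤ ∑ i, v i (A i))
    (hBfreeable : ∀ τ : Equiv.Perm (Fin n),
        ∑ i, v i (A (σ (τ i))) ≤ ∑ i, v i (A (σ i))) :
    ∀ i, v i (A i) + p i = v i (A (σ i)) + p (σ i) := by
  have h1 := hAfreeable σ
  have h2 := hBfreeable σ⁻¹
  simp only [Equiv.Perm.inv_def, Equiv.apply_symm_apply] at h2
  have hveq : ∑ i, v i (A (σ i)) = ∑ i, v i (A i) := le_antisymm h1 h2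
  have hpeq : ∑ i, p (σ i) = ∑ i, p i := Equiv.sum_comp σ p
  have hsum : ∑ i, (v i (A (σ i)) + p (σ i)) = ∑ i, (v i (A i) + p i) := by
    rw [Finset.sum_add_distrib, Finset.sum_add_distrib, hveq, hpeq]
  have := (Finset.sum_eq_sum_iff_of_le (fun i _ => hEF i (σ i))).mp hsum
  exact fun i => ((this i (Finset.mem_univ i))).symm
end

section
/- Under dichotomous valuations, if Y = (Y_1, ..., Y_n) is an envy-freeable partial allocation, g is an unallocated good, and agent x satisfies v_x(Y_x ∪ {g}) − v_x(Y_x) = 1, then the allocation obtained from Y by adding g to bundle Y_x is also envy-freeable. -/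
/-!
Replacing bundle `x` by `Y x ∪ {g}` changes the welfare of any reassignment `τ` by the marginal
value of `g` to the agent `τ⁻¹ x` who receives that bundle. This is exactly `1` for the identity
and at most `1` for every `τ`, by dichotomy, so the identity stays welfare-maximizing.
-/

open Finset Function

theorem sum_update_comp_perm {ι α β : Type*} [Fintype ι] [DecidableEq ι] [AddCommGroup β]
    (v : ι → α → β) (Z : ι → α) (x : ι) (S : α) (τ : Equiv.Perm ι) :
    ∑ i, v i (update Z x S (τ i)) = ∑ i, v i (Z (τ i)) + (v (τ.symm x) S - v (τ.symm x) (Z x)) := by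
  have hupdate : (fun i => v i (update Z x S (τ i)))
      = update (fun i => v i (Z (τ i))) (τ.symm x) (v (τ.symm x) S) := by
    funext i
    by_cases h : τ i = x
    · obtain rfl := τ.eq_symm_apply.mpr h
      simp [h]
    · rw [update_of_ne h, update_of_ne (fun h' => h (τ.eq_symm_apply.mp h'))]
  rw [hupdate, sum_update_of_mem (mem_univ _),
    sum_eq_add_sum_sdiff_singleton_of_mem (mem_univ (τ.symm x)), Equiv.apply_symm_apply]
  abel

theorem add_good_preserves_envy_freeability_general {n m : ℕ}
    (v : Fin n → Finset (Fin m) → ℝ)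
    (hdich : ∀ i (S : Finset (Fin m)) (g : Fin m),
        v i (insert g S) - v i S = 0 ∨ v i (insert g S) - v i S = 1)
    (Y : Fin n → Finset (Fin m))
    (hYfreeable : ∀ τ : Equiv.Perm (Fin n),
        ∑ i, v i (Y (τ i)) ≤ ∑ i, v i (Y i))
    (g : Fin m)
    (x : Fin n) (hx : v x (insert g (Y x)) - v x (Y x) = 1) :
    ∀ τ : Equiv.Perm (Fin n),
      ∑ i, v i (Function.update Y x (insert g (Y x)) (τ i)) ≤
        ∑ i, v i (Function.update Y x (insert g (Y x)) i) := by
  intro τ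
  have hgain_le_one : v (τ.symm x) (insert g (Y x)) - v (τ.symm x) (Y x) ≤ 1 := by
    rcases hdich (τ.symm x) (Y x) g with h | h <;> linarith
  have hnew := sum_update_comp_perm v Y x (insert g (Y x)) τ
  have hold := sum_update_comp_perm v Y x (insert g (Y x)) (Equiv.refl _)
  simp only [Equiv.refl_apply, Equiv.refl_symm] at hold
  linarith [hYfreeable τ]

/-- Under dichotomous valuations, if `Y` is an envy-freeable partial
allocation (it maximizes social welfare over all reassignments of its bundles),
`g` is an unallocated good, and agent `x` has marginal value `1` for `g` relative
to `Y x`, then the allocation obtained by adding `g` to `Y x` is envy-freeable. -/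
theorem add_good_preserves_envy_freeability {n m : ℕ}
    (v : Fin n → Finset (Fin m) → ℝ)
    (hempty : ∀ i, v i ∅ = 0)
    (hdich : ∀ i (S : Finset (Fin m)) (g : Fin m),
        v i (insert g S) - v i S = 0 ∨ v i (insert g S) - v i S = 1)
    (Y : Fin n → Finset (Fin m))
    (hdisj : ∀ i j, i ≠ j → Disjoint (Y i) (Y j))
    (hYfreeable : ∀ τ : Equiv.Perm (Fin n),
        ∑ i, v i (Y (τ i)) ≤ ∑ i, v i (Y i))
    (g : Fin m) (hg : ∀ i, g ∉ Y i)
    (x : Fin n) (hx : v x (insert g (Y x)) - v x (Y x) = 1) :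
    ∀ τ : Equiv.Perm (Fin n),
      ∑ i, v i (Function.update Y x (insert g (Y x)) (τ i)) ≤
        ∑ i, v i (Function.update Y x (insert g (Y x)) i) :=
  add_good_preserves_envy_freeability_general v hdich Y hYfreeable g x hx
end

section
/- Under dichotomous valuations, if Y is an envy-freeable allocation, g an unallocated good, x an agent, and Z the allocation obtained by adding g to Y_x, then for any directed path P in the envy graph (a sequence of distinct vertices), the weight of P in G_Z is at most one more than its weight in G_Y: w_Z(P) ≤ w_Y(P) + 1. -/
lemma indicator_sum_le_one {n : ℕ} (x : Fin n) :
    ∀ (l : List (Fin n)), l.Nodup →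
      ((l.map (fun b => if b = x then (1:ℝ) else 0)).sum) ≤ 1 := by
  intro l hl
  induction l with
  | nil => simp
  | cons a t ih =>
    rw [List.nodup_cons] at hl
    by_cases hax : a = x
    · subst hax
      have hz : ((t.map (fun b => if b = a then (1:ℝ) else 0)).sum) = 0 := by
        apply List.sum_eq_zero
        intro y hy
        simp only [List.mem_map] at hy
        obtain ⟨b, hb, rfl⟩ := hy
        have : b ≠ a := fun h => hl.1 (h ▸ hb)
        simp [this]
      simp [hz]
    · simp only [List.map_cons, List.sum_cons, if_neg hax, zero_add]
      exact ih hl.2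

/-- Under dichotomous valuations, if `Z` is obtained from the
envy-freeable allocation `Y` by adding an unallocated good `g` to `Y x`, then for
any directed path `P` (a list of distinct vertices) in the envy graph, the weight
of `P` in `G_Z` is at most one more than its weight in `G_Y`. -/
theorem path_weight_increase_at_most_one {n m : ℕ}
    (v : Fin n → Finset (Fin m) → ℝ)
    (hempty : ∀ i, v i ∅ = 0)
    (hdich : ∀ i (S : Finset (Fin m)) (g : Fin m),
        v i (insert g S) - v i S = 0 ∨ v i (insert g S) - v i S = 1)
    (Y : Fin n → Finset (Fin m))
    (hdisj : ∀ i j, i ≠ j → Disjoint (Y i) (Y j))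
    (hYfreeable : ∃ p : Fin n → ℝ, (∀ i, 0 ≤ p i) ∧
        ∀ i j, v i (Y j) + p j ≤ v i (Y i) + p i)
    (g : Fin m) (hg : ∀ i, g ∉ Y i) (x : Fin n)
    (P : List (Fin n)) (hP : P.Nodup) :
    walkWeight (fun a b =>
        v a (Function.update Y x (insert g (Y x)) b) -
          v a (Function.update Y x (insert g (Y x)) a)) P ≤
      walkWeight (fun a b => v a (Y b) - v a (Y a)) P + 1 := by
  set Z := Function.update Y x (insert g (Y x)) with hZ
  have hZapp : ∀ b, Z b = if b = x then insert g (Y x) else Y b := by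
    intro b; simp [hZ, Function.update_apply]
  -- bounds on the marginal gain δ a
  have hδ : ∀ a, 0 ≤ v a (insert g (Y x)) - v a (Y x) ∧
      v a (insert g (Y x)) - v a (Y x) ≤ 1 := by
    intro a
    rcases hdich a (Y x) g with h | h <;> rw [h] <;> norm_num
  -- pointwise edge inequality
  have hedge : ∀ a b : Fin n,
      v a (Z b) - v a (Z a) ≤
        (v a (Y b) - v a (Y a)) + (if b = x then (1:ℝ) else 0) := by
    intro a b
    rw [hZapp a, hZapp b]
    by_cases hb : b = x <;> by_cases ha : a = x <;>
      simp only [hb, ha, if_pos, if_neg, if_true, if_false] <;>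
      simp_all <;> nlinarith [(hδ a).1, (hδ a).2, (hδ x).1, (hδ x).2]
  unfold walkWeight
  have key : ((P.zip P.tail).map (fun e => v e.1 (Z e.2) - v e.1 (Z e.1))).sum ≤
      ((P.zip P.tail).map (fun e => (v e.1 (Y e.2) - v e.1 (Y e.1)) +
        (if e.2 = x then (1:ℝ) else 0))).sum := by
    apply List.sum_le_sum
    intro e _
    exact hedge e.1 e.2
  have split : ((P.zip P.tail).map (fun e => (v e.1 (Y e.2) - v e.1 (Y e.1)) +
        (if e.2 = x then (1:ℝ) else 0))).sum =
      ((P.zip P.tail).map (fun e => v e.1 (Y e.2) - v e.1 (Y e.1))).sum +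
      ((P.zip P.tail).map (fun e => if e.2 = x then (1:ℝ) else 0)).sum := by
    induction (P.zip P.tail) with
    | nil => simp
    | cons a t ih => simp [ih]; ring
  have hind : ((P.zip P.tail).map (fun e => if e.2 = x then (1:ℝ) else 0)).sum ≤ 1 := by
    have hlen : P.tail.length ≤ P.length := (@List.length_tail _ P) ▸ Nat.sub_le _ _
    have : (P.zip P.tail).map (fun e => if e.2 = x then (1:ℝ) else 0) =
        P.tail.map (fun b => if b = x then (1:ℝ) else 0) := by
      have := List.map_snd_zip hlen
      calc (P.zip P.tail).map (fun e => if e.2 = x then (1:ℝ) else 0)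
          = ((P.zip P.tail).map Prod.snd).map (fun b => if b = x then (1:ℝ) else 0) := by
            rw [List.map_map]; rfl
        _ = P.tail.map (fun b => if b = x then (1:ℝ) else 0) := by rw [this]
    rw [this]
    exact indicator_sum_le_one x P.tail (hP.tail)
  linarith [key, split ▸ key]
end

section
/- Under dichotomous valuations, let (A, p) be an envy-free solution with p ∈ {0,1}^n that is extendable with an unallocated good g via permutation σ and agent κ (i.e., B := A_σ with subsidies q := p_σ is envy-free, κ is among the most-subsidized agents under q, and v_κ(B_κ ∪ {g}) − v_κ(B_κ) = 1). Then the allocation C := (B_1, ..., B_κ ∪ {g}, ..., B_n) is envy-freeable with a subsidy vector in {0,1}^n. -/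
/-!
Shift all subsidies by `1 - q κ`, which keeps `(B, q)` envy-free and, because `κ` is most
subsidized and subsidies are binary, makes them binary with `κ` at `1`. Then give `g` to `κ`
and lower `κ`'s subsidy by one: `κ` gains exactly what it loses, and since marginals are at
most `1`, no other agent values `B κ ∪ {g}` by more than the lowered subsidy makes up for.
-/

namespace Allocation

variable {ι β : Type*}

def IsEnvyFree (v : ι → β → ℝ) (B : ι → β) (q : ι → ℝ) : Prop :=
  ∀ i j, v i (B j) + q j ≤ v i (B i) + q i

theorem IsEnvyFree.add_const {v : ι → β → ℝ} {B : ι → β} {q : ι → ℝ}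
    (h : IsEnvyFree v B q) (c : ℝ) : IsEnvyFree v B (fun j => q j + c) :=
  fun i j => by linarith [h i j]

theorem IsEnvyFree.update_bundle_sub [DecidableEq ι] {v : ι → β → ℝ} {B : ι → β}
    {q : ι → ℝ} (h : IsEnvyFree v B q) {κ : ι} {S : β} {δ : ℝ}
    (hgain : v κ (B κ) + δ ≤ v κ S) (hle : ∀ i, v i S ≤ v i (B κ) + δ) :
    IsEnvyFree v (Function.update B κ S) (Function.update q κ (q κ - δ)) := by
  intro i j
  rcases eq_or_ne i κ with rfl | hi <;> rcases eq_or_ne j i with rfl | hj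
  · exact le_rfl
  · simp only [Function.update_self, Function.update_of_ne hj]
    linarith [h i j]
  · exact le_rfl
  · rcases eq_or_ne j κ with rfl | hjκ
    · simp only [Function.update_self, Function.update_of_ne hi]
      linarith [h i j, hle i]
    · simp only [Function.update_of_ne hi, Function.update_of_ne hjκ]
      exact h i j

theorem update_shift_sub_one_binary [DecidableEq ι] {q : ι → ℝ} {κ : ι}
    (hq : ∀ i, q i = 0 ∨ q i = 1) (hmax : ∀ j, q j ≤ q κ) (i : ι) :
    Function.update (fun j => q j + (1 - q κ)) κ (q κ + (1 - q κ) - 1) i = 0 ∨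
      Function.update (fun j => q j + (1 - q κ)) κ (q κ + (1 - q κ) - 1) i = 1 := by
  rcases eq_or_ne i κ with rfl | hi
  · left
    simp only [Function.update_self]
    ring
  · simp only [Function.update_of_ne hi]
    rcases hq κ with hκ | hκ
    · have : q i = 0 := by rcases hq i with h | h <;> linarith [hmax i]
      right
      linarith
    · simpa [hκ] using hq i

end Allocation

theorem extendable_keeps_binary_subsidies_general {n m : ℕ}
    (v : Fin n → Finset (Fin m) → ℝ)
    (hdich : ∀ i (S : Finset (Fin m)) (g : Fin m),
        v i (insert g S) - v i S = 0 ∨ v i (insert g S) - v i S = 1)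
    (p : Fin n → ℝ) (hp01 : ∀ i, p i = 0 ∨ p i = 1)
    (g : Fin m)
    (σ : Equiv.Perm (Fin n)) (κ : Fin n)
    (B : Fin n → Finset (Fin m))
    (q : Fin n → ℝ) (hq : q = fun i => p (σ i))
    (hEFB : ∀ i j, v i (B j) + q j ≤ v i (B i) + q i)
    (hκmax : ∀ j, q j ≤ q κ)
    (hκmarg : v κ (insert g (B κ)) - v κ (B κ) = 1) :
    ∃ q' : Fin n → ℝ, (∀ i, q' i = 0 ∨ q' i = 1) ∧
      ∀ i j, v i (Function.update B κ (insert g (B κ)) j) + q' j ≤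
        v i (Function.update B κ (insert g (B κ)) i) + q' i := by
  have hq01 : ∀ i, q i = 0 ∨ q i = 1 := fun i => hq ▸ hp01 (σ i)
  have hmarg : ∀ i, v i (insert g (B κ)) ≤ v i (B κ) + 1 := fun i => by
    rcases hdich i (B κ) g with h | h <;> linarith
  exact ⟨_, Allocation.update_shift_sub_one_binary hq01 hκmax,
    (Allocation.IsEnvyFree.add_const hEFB (1 - q κ)).update_bundle_sub (by linarith) hmarg⟩

/-- Under dichotomous valuations, let `(A, p)` be an envy-free
solution with `p ∈ {0,1}^n` that is extendable with an unallocated good `g` via a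
permutation `σ` and agent `κ`: with `B := A_σ` and `q := p_σ`, the pair `(B, q)`
is an envy-free solution, `κ` is among the most subsidized agents under `q`, and
the marginal value of `g` for `κ` relative to `B κ` is `1`. Then the allocation
`C` obtained from `B` by adding `g` to `B κ` is envy-freeable with a subsidy
vector in `{0,1}^n`. -/
theorem extendable_keeps_binary_subsidies {n m : ℕ}
    (v : Fin n → Finset (Fin m) → ℝ)
    (hempty : ∀ i, v i ∅ = 0)
    (hdich : ∀ i (S : Finset (Fin m)) (g : Fin m),
        v i (insert g S) - v i S = 0 ∨ v i (insert g S) - v i S = 1)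
    (A : Fin n → Finset (Fin m))
    (hdisj : ∀ i j, i ≠ j → Disjoint (A i) (A j))
    (p : Fin n → ℝ) (hp01 : ∀ i, p i = 0 ∨ p i = 1)
    (hEF : ∀ i j, v i (A j) + p j ≤ v i (A i) + p i)
    (g : Fin m) (hg : ∀ i, g ∉ A i)
    (σ : Equiv.Perm (Fin n)) (κ : Fin n)
    (B : Fin n → Finset (Fin m)) (hB : B = fun i => A (σ i))
    (q : Fin n → ℝ) (hq : q = fun i => p (σ i))
    (hEFB : ∀ i j, v i (B j) + q j ≤ v i (B i) + q i)
    (hκmax : ∀ j, q j ≤ q κ)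
    (hκmarg : v κ (insert g (B κ)) - v κ (B κ) = 1) :
    ∃ q' : Fin n → ℝ, (∀ i, q' i = 0 ∨ q' i = 1) ∧
      ∀ i j, v i (Function.update B κ (insert g (B κ)) j) + q' j ≤
        v i (Function.update B κ (insert g (B κ)) i) + q' i :=
  extendable_keeps_binary_subsidies_general v hdich p hp01 g σ κ B q hq hEFB hκmax hκmarg
end

section
/- Under dichotomous valuations, suppose (A, p) is an envy-free solution with p ∈ {0,1}^n, and for the allocation C obtained by adding an unallocated good g to the bundle of an agent κ with q_κ = 1 and v_κ(A_κ ∪ {g}) − v_κ(A_κ) = 1, define subsidies q̂ by q̂_κ = 0 and q̂_i = p_i for i ≠ κ. Then (C, q̂) is an envy-free solution. -/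
/-!
Only agent `κ`'s bundle and subsidy change. Good `g` is worth exactly one to `κ`, offsetting the
unit of subsidy it loses, so its utility is unchanged, while by dichotomy no other agent values `A κ ∪ {g}` more
than one above `A κ`, which is exactly the subsidy `κ` gives up; hence nobody's envy towards
`κ` grows.
-/

section EnvyFree

variable {ι β : Type*}

def EnvyFree (v : ι → β → ℝ) (A : ι → β) (p : ι → ℝ) : Prop :=
  ∀ i j, v i (A j) + p j ≤ v i (A i) + p i

theorem EnvyFree.update [DecidableEq ι] {v : ι → β → ℝ} {A : ι → β} {p : ι → ℝ}
    (hEF : EnvyFree v A p) {κ : ι} {B : β} {q : ℝ}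
    (hown : v κ (A κ) + p κ ≤ v κ B + q)
    (hothers : ∀ i ≠ κ, v i B + q ≤ v i (A κ) + p κ) :
    EnvyFree v (Function.update A κ B) (Function.update p κ q) := by
  intro i j
  rcases eq_or_ne i κ with rfl | hi <;> rcases eq_or_ne j i with rfl | hj
  · exact le_rfl
  · simp only [Function.update_self, Function.update_of_ne hj]
    exact (hEF i j).trans hown
  · exact le_rfl
  · rcases eq_or_ne j κ with rfl | hjκ
    · simp only [Function.update_self, Function.update_of_ne hi]
      exact (hothers i hi).trans (hEF i j)
    · simp only [Function.update_of_ne hi, Function.update_of_ne hjκ]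
      exact hEF i j

end EnvyFree

theorem reduce_subsidy_of_extender_general {n m : ℕ}
    (v : Fin n → Finset (Fin m) → ℝ)
    (hdich : ∀ i (S : Finset (Fin m)) (g : Fin m),
        v i (insert g S) - v i S = 0 ∨ v i (insert g S) - v i S = 1)
    (A : Fin n → Finset (Fin m))
    (p : Fin n → ℝ)
    (hEF : ∀ i j, v i (A j) + p j ≤ v i (A i) + p i)
    (g : Fin m)
    (κ : Fin n) (hpκ : p κ = 1)
    (hκmarg : v κ (insert g (A κ)) - v κ (A κ) = 1) :
    ∀ i j, v i (Function.update A κ (insert g (A κ)) j) + Function.update p κ 0 j ≤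
      v i (Function.update A κ (insert g (A κ)) i) + Function.update p κ 0 i := by
  have hmarg_le_one : ∀ i, v i (insert g (A κ)) ≤ v i (A κ) + 1 := fun i => by
    rcases hdich i (A κ) g with h | h <;> linarith
  refine EnvyFree.update hEF (by linarith) fun i _ => ?_
  linarith [hmarg_le_one i]

/-- Under dichotomous valuations, suppose `(A, p)` is an envy-free
solution with `p ∈ {0,1}^n`, agent `κ` has subsidy `p κ = 1` and marginal value
`1` for an unallocated good `g` relative to `A κ`. Let `C` be obtained by adding
`g` to `A κ`, and define subsidies `q̂` by `q̂ κ = 0` and `q̂ i = p i` otherwise.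
Then `(C, q̂)` is an envy-free solution. -/
theorem reduce_subsidy_of_extender {n m : ℕ}
    (v : Fin n → Finset (Fin m) → ℝ)
    (hempty : ∀ i, v i ∅ = 0)
    (hdich : ∀ i (S : Finset (Fin m)) (g : Fin m),
        v i (insert g S) - v i S = 0 ∨ v i (insert g S) - v i S = 1)
    (A : Fin n → Finset (Fin m))
    (hdisj : ∀ i j, i ≠ j → Disjoint (A i) (A j))
    (p : Fin n → ℝ) (hp01 : ∀ i, p i = 0 ∨ p i = 1)
    (hEF : ∀ i j, v i (A j) + p j ≤ v i (A i) + p i)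
    (g : Fin m) (hg : ∀ i, g ∉ A i)
    (κ : Fin n) (hpκ : p κ = 1)
    (hκmarg : v κ (insert g (A κ)) - v κ (A κ) = 1) :
    ∀ i j, v i (Function.update A κ (insert g (A κ)) j) + Function.update p κ 0 j ≤
      v i (Function.update A κ (insert g (A κ)) i) + Function.update p κ 0 i :=
  reduce_subsidy_of_extender_general v hdich A p hEF g κ hpκ hκmarg
end

section
/- Under dichotomous valuations, if an envy-freeable allocation A admits an envy-free solution with all subsidies equal to 0 (i.e., A is envy-free), then for any agent κ and unallocated good g with marginal value 1 for κ, the allocation C = (A_1, ..., A_κ ∪ {g}, ..., A_n) is envy-freeable with subsidies in {0,1}: every path in the envy graph G_C has weight at most 1. -/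
lemma walkWeight_le_aux {n : ℕ} (w : Fin n → Fin n → ℝ) (κ : Fin n)
    (hw : ∀ a b, w a b ≤ if b = κ then 1 else 0) :
    ∀ L : List (Fin n), L.Nodup → walkWeight w L ≤ if κ ∈ L.tail then 1 else 0 := by
  intro L
  induction L with
  | nil => intro _; simp [walkWeight]
  | cons x rest ih =>
    intro hnd
    cases rest with
    | nil => simp [walkWeight]
    | cons y rest' =>
      have hnd' : (y :: rest').Nodup := hnd.of_cons
      have h1 : walkWeight w (x :: y :: rest') = w x y + walkWeight w (y :: rest') := by
        simp [walkWeight]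
      have ih' := ih hnd'
      have hxy := hw x y
      by_cases hy : y = κ
      · subst hy
        have hκnot : y ∉ rest' := (List.nodup_cons.mp hnd').1
        simp only [List.tail_cons] at ih'
        simp only [hκnot, ↓reduceIte] at ih'
        have hgoal : (if y ∈ (x :: y :: rest').tail then (1:ℝ) else 0) = 1 := by simp
        have hx1 : w x y ≤ 1 := by simpa using hxy
        rw [hgoal, h1]; linarith
      · rw [if_neg hy] at hxy
        simp only [List.tail_cons] at ih' ⊢
        have hne : κ ≠ y := fun h => hy h.symm
        have hiff : (κ ∈ y :: rest') ↔ κ ∈ rest' := by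
          simp [List.mem_cons, hne]
        by_cases hmem : κ ∈ rest'
        · simp only [hiff.mpr hmem, ↓reduceIte]
          simp only [hmem, ↓reduceIte] at ih'
          rw [h1]; linarith
        · simp only [show ¬ κ ∈ y :: rest' from fun h => hmem (hiff.mp h), ↓reduceIte]
          simp only [hmem, ↓reduceIte] at ih'
          rw [h1]; linarith

/-- Under dichotomous valuations, if allocation `A` is envy-free
(zero subsidies suffice), `g` is an unallocated good, and agent `κ` has marginal
value `1` for `g`, then for the allocation `C` obtained by adding `g` to `A κ`:
every (simple) path in the envy graph `G_C` has weight at most `1`, and `C` is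
envy-freeable with subsidies in `{0,1}`. -/
theorem envy_free_plus_good_binary_subsidies {n m : ℕ}
    (v : Fin n → Finset (Fin m) → ℝ)
    (hempty : ∀ i, v i ∅ = 0)
    (hdich : ∀ i (S : Finset (Fin m)) (g : Fin m),
        v i (insert g S) - v i S = 0 ∨ v i (insert g S) - v i S = 1)
    (A : Fin n → Finset (Fin m))
    (hdisj : ∀ i j, i ≠ j → Disjoint (A i) (A j))
    (hEF : ∀ i j, v i (A j) ≤ v i (A i))
    (g : Fin m) (hg : ∀ i, g ∉ A i)
    (κ : Fin n) (hκmarg : v κ (insert g (A κ)) - v κ (A κ) = 1) :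
    (∀ P : List (Fin n), P.Nodup →
        walkWeight (fun a b =>
          v a (Function.update A κ (insert g (A κ)) b) -
            v a (Function.update A κ (insert g (A κ)) a)) P ≤ 1) ∧
    (∃ q : Fin n → ℝ, (∀ i, q i = 0 ∨ q i = 1) ∧
        ∀ i j, v i (Function.update A κ (insert g (A κ)) j) + q j ≤
          v i (Function.update A κ (insert g (A κ)) i) + q i) := by
  set C := Function.update A κ (insert g (A κ)) with hC
  have hCκ : C κ = insert g (A κ) := Function.update_self κ _ A
  have hCne : ∀ j, j ≠ κ → C j = A j := fun j hj => Function.update_of_ne hj _ A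
  -- value of own bundle only increases
  have hown : ∀ a, v a (A a) ≤ v a (C a) := by
    intro a
    by_cases ha : a = κ
    · subst ha; rw [hCκ]; linarith
    · rw [hCne a ha]
  -- value of C b for any a
  have hCb : ∀ a b, v a (C b) ≤ v a (A b) + (if b = κ then 1 else 0) := by
    intro a b
    by_cases hb : b = κ
    · subst hb
      rw [hCκ, if_pos rfl]
      rcases hdich a (A b) g with h | h <;> linarith
    · rw [hCne b hb, if_neg hb]; linarith
  have hw : ∀ a b, v a (C b) - v a (C a) ≤ if b = κ then 1 else 0 := by
    intro a b
    have h1 := hCb a b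
    have h2 := hEF a b
    have h3 := hown a
    by_cases hb : b = κ <;> simp only [hb, if_pos, if_neg] at * <;> linarith
  constructor
  · intro P hP
    have := walkWeight_le_aux (fun a b => v a (C b) - v a (C a)) κ hw P hP
    by_cases hmem : κ ∈ P.tail
    · rwa [if_pos hmem] at this
    · rw [if_neg hmem] at this; linarith
  · refine ⟨fun i => if i = κ then 0 else 1, fun i => by by_cases h : i = κ <;> simp [h], ?_⟩
    intro i j
    show v i (C j) + (if j = κ then (0:ℝ) else 1) ≤ v i (C i) + (if i = κ then (0:ℝ) else 1)
    have h1 := hCb i j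
    have h2 := hEF i j
    have h3 := hown i
    have h4 : v i (A κ) ≤ v i (A i) := hEF i κ
    have h5 : v κ (C κ) = v κ (A κ) + 1 := by rw [hCκ]; linarith
    split_ifs with hj hi hi
    · subst hj; subst hi; simp
    · rw [if_pos hj] at h1
      have h6 : v i (C i) = v i (A i) := by rw [hCne i hi]
      subst hj; linarith
    · subst hi
      rw [if_neg hj] at h1
      linarith
    · rw [if_neg hj] at h1
      have h6 : v i (C i) = v i (A i) := by rw [hCne i hi]
      linarith
end

section
/- Let A be an envy-freeable allocation and K = i_1 → i_2 → ... → i_h → i_1 a directed cycle in the envy graph G_A of total weight zero. Define the permutation σ̂ by σ̂(i_a) = i_{a+1} (indices mod h) on cycle vertices and σ̂(x) = x otherwise. Then the reassigned allocation A_{σ̂} has the same social welfare as A and is therefore also envy-freeable. -/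
/-!
Reassigning bundles along `σ̂` changes the welfare by `∑ᵢ w_A(i, σ̂ i)`; only cycle vertices
contribute, so this is the weight of `K`, namely zero. Since `A` maximizes welfare over all
reassignments of its bundles, and the reassignments of `A_σ̂` are among them, `A_σ̂` is welfare
maximizing as well.
-/

open Finset Function

section Reassignment

variable {ι α : Type*} [Fintype ι]

def welfare (v : ι → α → ℝ) (A : ι → α) : ℝ := ∑ i, v i (A i)

def envyWeight (v : ι → α → ℝ) (A : ι → α) (i j : ι) : ℝ := v i (A j) - v i (A i)

theorem welfare_comp_perm_sub_welfare (v : ι → α → ℝ) (A : ι → α) (σ : Equiv.Perm ι) :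
    welfare v (A ∘ σ) - welfare v A = ∑ i, envyWeight v A i (σ i) := by
  simp only [welfare, envyWeight, comp_apply, sum_sub_distrib]

theorem sum_perm_eq_sum_comp_of_eq_self_of_notMem_range {κ M : Type*} [Fintype κ]
    [AddCommMonoid M] (f : ι → ι → M) (hf : ∀ i, f i i = 0) (σ : Equiv.Perm ι) (c : κ → ι)
    (hc : Injective c) (hσ : ∀ x ∉ Set.range c, σ x = x) :
    ∑ i, f i (σ i) = ∑ a, f (c a) (σ (c a)) :=
  (Fintype.sum_of_injective c hc _ _ (fun x hx ↦ by rw [hσ x hx, hf]) fun _ ↦ rfl).symm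

theorem welfare_comp_perm_le_of_welfare_eq {v : ι → α → ℝ} {A : ι → α}
    (hA : ∀ τ : Equiv.Perm ι, welfare v (A ∘ τ) ≤ welfare v A) {σ : Equiv.Perm ι}
    (hσ : welfare v (A ∘ σ) = welfare v A) (τ : Equiv.Perm ι) :
    welfare v (A ∘ σ ∘ τ) ≤ welfare v (A ∘ σ) :=
  hσ ▸ hA (σ * τ)

end Reassignment

theorem zero_cycle_reassignment_envy_freeable_general {n m h : ℕ}
    (v : Fin n → Finset (Fin m) → ℝ)
    (A : Fin n → Finset (Fin m))
    (hAfreeable : ∀ τ : Equiv.Perm (Fin n),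
        ∑ i, v i (A (τ i)) ≤ ∑ i, v i (A i))
    (c : Fin (h + 1) → Fin n) (hc : Function.Injective c)
    (hcycle : ∑ a : Fin (h + 1), (v (c a) (A (c (a + 1))) - v (c a) (A (c a))) = 0)
    (σ : Equiv.Perm (Fin n))
    (hσcycle : ∀ a : Fin (h + 1), σ (c a) = c (a + 1))
    (hσfix : ∀ x : Fin n, (∀ a : Fin (h + 1), x ≠ c a) → σ x = x) :
    (∑ i, v i (A (σ i)) = ∑ i, v i (A i)) ∧
    (∀ τ : Equiv.Perm (Fin n),
        ∑ i, v i (A (σ (τ i))) ≤ ∑ i, v i (A (σ i))) := by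
  have hweight : ∑ i, envyWeight v A i (σ i) = 0 := by
    rw [sum_perm_eq_sum_comp_of_eq_self_of_notMem_range _ (fun _ ↦ sub_self _) σ c hc
      fun x hx ↦ hσfix x fun a hxa ↦ hx ⟨a, hxa.symm⟩]
    simpa only [envyWeight, hσcycle] using hcycle
  have hwelfare : welfare v (A ∘ σ) = welfare v A := by
    rw [← sub_eq_zero, welfare_comp_perm_sub_welfare, hweight]
  exact ⟨hwelfare, welfare_comp_perm_le_of_welfare_eq hAfreeable hwelfare⟩

/-- Let `A` be an envy-freeable allocation (it maximizes social
welfare over all reassignments of its bundles) and let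
`K = c 0 → c 1 → ... → c h → c 0` be a directed cycle of distinct vertices in the
envy graph `G_A` of total weight zero. Let `σ̂` be the permutation mapping each
cycle vertex to its successor and fixing all other agents. Then the reassigned
allocation `A_σ̂` has the same social welfare as `A` and is also envy-freeable. -/
theorem zero_cycle_reassignment_envy_freeable {n m h : ℕ}
    (v : Fin n → Finset (Fin m) → ℝ)
    (A : Fin n → Finset (Fin m))
    (hdisj : ∀ i j, i ≠ j → Disjoint (A i) (A j))
    (hAfreeable : ∀ τ : Equiv.Perm (Fin n),
        ∑ i, v i (A (τ i)) ≤ ∑ i, v i (A i))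
    (c : Fin (h + 1) → Fin n) (hc : Function.Injective c)
    (hcycle : ∑ a : Fin (h + 1), (v (c a) (A (c (a + 1))) - v (c a) (A (c a))) = 0)
    (σ : Equiv.Perm (Fin n))
    (hσcycle : ∀ a : Fin (h + 1), σ (c a) = c (a + 1))
    (hσfix : ∀ x : Fin n, (∀ a : Fin (h + 1), x ≠ c a) → σ x = x) :
    (∑ i, v i (A (σ i)) = ∑ i, v i (A i)) ∧
    (∀ τ : Equiv.Perm (Fin n),
        ∑ i, v i (A (σ (τ i))) ≤ ∑ i, v i (A (σ i))) :=
  zero_cycle_reassignment_envy_freeable_general v A hAfreeable c hc hcycle σ hσcycle hσfix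
end

section
/- Under dichotomous valuations, for every fair division instance with n agents and m goods there exists a complete allocation A of all the goods and a subsidy vector p ∈ {0,1}^n such that (A, p) is an envy-free solution: v_i(A_i) + p_i ≥ v_i(A_j) + p_j for all agents i, j. -/
open Finset

namespace EFSaux2




variable {α : Type*}

/-- Dedup a chain keeping endpoints. -/
theorem exists_nodup_chain_aux (r : α → α → Prop) :
    ∀ (N : ℕ) (l : List α) (x : α), l.length ≤ N → List.Chain r x l →
      ∃ l' : List α, List.Chain r x l' ∧ l' ⊆ l ∧ (x :: l').Nodup ∧
        (x :: l').getLast (List.cons_ne_nil _ _) = (x :: l).getLast (List.cons_ne_nil _ _) := by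
  intro N
  induction N with
  | zero =>
    intro l x hl _
    have : l = [] := List.length_eq_zero_iff.mp (Nat.le_zero.mp hl)
    subst this
    exact ⟨[], List.Chain.nil, by simp, by simp, rfl⟩
  | succ N ih =>
    intro l x hl hc
    by_cases hx : x ∈ l
    · obtain ⟨l₁, l₂, rfl⟩ := List.append_of_mem hx
      have hc₂ : List.Chain r x l₂ := ((List.isChain_split (l₁ := x :: l₁)).mp hc).2
      have hlen : l₂.length ≤ N := by
        simp only [List.length_append, List.length_cons] at hl; omega
      obtain ⟨l', h1, h2, h3, h4⟩ := ih l₂ x hlen hc₂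
      refine ⟨l', h1, ?_, h3, ?_⟩
      · intro a ha
        simp only [List.mem_append, List.mem_cons]
        exact Or.inr (Or.inr (h2 ha))
      · rw [h4]
        have hsplit : x :: (l₁ ++ x :: l₂) = (x :: l₁) ++ x :: l₂ := by simp
        have h5 : (x :: (l₁ ++ x :: l₂)).getLast? = (x :: l₂).getLast? := by
          rw [hsplit]; exact List.getLast?_append_cons (x :: l₁) x l₂
        have h6 := List.getLast?_eq_getLast_of_ne_nil (l := x :: l₂) (List.cons_ne_nil _ _)
        have h7 := List.getLast?_eq_getLast_of_ne_nil (l := x :: (l₁ ++ x :: l₂))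
          (List.cons_ne_nil _ _)
        exact (Option.some.inj (h7.symm.trans (h5.trans h6))).symm
    · cases l with
      | nil => exact ⟨[], List.Chain.nil, by simp, by simp, rfl⟩
      | cons y t =>
        have hc' := List.chain_cons.mp hc
        have hlen : t.length ≤ N := by
          simp only [List.length_cons] at hl; omega
        obtain ⟨t', h1, h2, h3, h4⟩ := ih t y hlen hc'.2
        have hsub : y :: t' ⊆ y :: t := by
          intro a ha
          rcases List.mem_cons.mp ha with h | h
          · exact h ▸ List.mem_cons_self
          · exact List.mem_cons_of_mem _ (h2 h)
        refine ⟨y :: t', List.chain_cons.mpr ⟨hc'.1, h1⟩, hsub, ?_, ?_⟩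
        · refine List.nodup_cons.mpr ⟨fun hmem => hx (hsub hmem), h3⟩
        · rw [List.getLast_cons_cons, h4, List.getLast_cons_cons]

theorem exists_nodup_chain (r : α → α → Prop) {x y : α}
    (h : Relation.ReflTransGen r x y) (hxy : x ≠ y) :
    ∃ l : List α, l ≠ [] ∧ List.Chain r x l ∧ (x :: l).Nodup ∧
      (x :: l).getLast (List.cons_ne_nil _ _) = y := by
  obtain ⟨l, hc, hlast⟩ := List.exists_isChain_cons_of_relationReflTransGen h
  obtain ⟨l', h1, _, h3, h4⟩ := exists_nodup_chain_aux r l.length l x le_rfl hc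
  have hne : l' ≠ [] := by
    rintro rfl
    exact hxy (by simpa [hlast] using h4)
  exact ⟨l', hne, h1, h3, h4.trans hlast⟩





variable {n m : ℕ}

/-- subsidy function of a subsidized set -/
def pf (T : Finset (Fin n)) (i : Fin n) : ℕ := if i ∈ T then 1 else 0

/-- a solution of the sub-instance with goods `G` -/
def IsSol (V : Fin n → Finset (Fin m) → ℕ) (G : Finset (Fin m))
    (A : Fin n → Finset (Fin m)) (T : Finset (Fin n)) : Prop :=
  (∀ i j, i ≠ j → Disjoint (A i) (A j)) ∧ (∀ i, A i ⊆ G) ∧ (∀ x ∈ G, ∃ i, x ∈ A i) ∧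
  (∀ i j, V i (A j) + pf T j ≤ V i (A i) + pf T i)

variable {V : Fin n → Finset (Fin m) → ℕ} {G : Finset (Fin m)}
  {A : Fin n → Finset (Fin m)} {T : Finset (Fin n)} {g : Fin m}

theorem V_mono (hV : ∀ i S g, V i (insert g S) = V i S ∨ V i (insert g S) = V i S + 1)
    (i : Fin n) (S : Finset (Fin m)) (g : Fin m) : V i S ≤ V i (insert g S) := by
  rcases hV i S g with h | h <;> omega

theorem V_le (hV : ∀ i S g, V i (insert g S) = V i S ∨ V i (insert g S) = V i S + 1)
    (i : Fin n) (S : Finset (Fin m)) (g : Fin m) : V i (insert g S) ≤ V i S + 1 := by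
  rcases hV i S g with h | h <;> omega

/-- common structural part: updating agent `b`'s bundle to `insert g (A b)` keeps the
partition properties. -/
theorem update_struct (hg : g ∉ G) (hdisj : ∀ i j, i ≠ j → Disjoint (A i) (A j))
    (hsub : ∀ i, A i ⊆ G) (hcov : ∀ x ∈ G, ∃ i, x ∈ A i) (b : Fin n) :
    (∀ i j, i ≠ j → Disjoint (Function.update A b (insert g (A b)) i)
        (Function.update A b (insert g (A b)) j)) ∧
    (∀ i, Function.update A b (insert g (A b)) i ⊆ insert g G) ∧
    (∀ x ∈ insert g G, ∃ i, x ∈ Function.update A b (insert g (A b)) i) := by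
  classical
  have hgA : ∀ j, g ∉ A j := fun j hj => hg (hsub j hj)
  refine ⟨?_, ?_, ?_⟩
  · intro i j hij
    by_cases hib : i = b
    · rw [hib] at hij ⊢
      rw [Function.update_self, Function.update_of_ne (Ne.symm hij)]
      exact (Finset.disjoint_insert_left).mpr ⟨hgA j, hdisj _ _ hij⟩
    · rw [Function.update_of_ne hib]
      by_cases hjb : j = b
      · rw [hjb] at hij ⊢
        rw [Function.update_self]
        exact (Finset.disjoint_insert_right).mpr ⟨hgA i, hdisj _ _ hij⟩
      · rw [Function.update_of_ne hjb]; exact hdisj _ _ hij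
  · intro i
    by_cases hib : i = b
    · rw [hib, Function.update_self]; exact Finset.insert_subset_insert _ (hsub b)
    · rw [Function.update_of_ne hib]
      exact (hsub i).trans (Finset.subset_insert _ _)
  · intro x hx
    rcases Finset.mem_insert.mp hx with rfl | hxG
    · exact ⟨b, by rw [Function.update_self]; exact Finset.mem_insert_self _ _⟩
    · obtain ⟨i, hi⟩ := hcov x hxG
      refine ⟨i, ?_⟩
      by_cases hib : i = b
      · rw [hib] at hi ⊢
        rw [Function.update_self]; exact Finset.mem_insert_of_mem hi
      · rw [Function.update_of_ne hib]; exact hi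

/-- Move G1: give `g` to a subsidized agent with marginal value for it, removing its
subsidy. -/
theorem moveG1 (hV : ∀ i S g, V i (insert g S) = V i S ∨ V i (insert g S) = V i S + 1)
    (hg : g ∉ G) (hsol : IsSol V G A T) {b : Fin n} (hb : b ∈ T)
    (hmarg : V b (insert g (A b)) = V b (A b) + 1) :
    ∃ A' T', IsSol V (insert g G) A' T' := by
  classical
  obtain ⟨hdisj, hsub, hcov, henvy⟩ := hsol
  obtain ⟨h1, h2, h3⟩ := update_struct hg hdisj hsub hcov b
  refine ⟨Function.update A b (insert g (A b)), T.erase b, h1, h2, h3, ?_⟩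
  have hpfb : pf (T.erase b) b = 0 := by simp [pf]
  have hpf : ∀ y, y ≠ b → pf (T.erase b) y = pf T y := by
    intro y hy; simp [pf, Finset.mem_erase, hy]
  have hpfTb : pf T b = 1 := by simp [pf, hb]
  intro a j
  by_cases hab : a = b
  · rw [hab]
    by_cases hjb : j = b
    · rw [hjb]
    · rw [Function.update_self, Function.update_of_ne hjb, hpfb, hpf j hjb]
      have := henvy b j
      omega
  · by_cases hjb : j = b
    · rw [hjb, Function.update_self, Function.update_of_ne hab, hpfb, hpf a hab]
      have h4 : V a (insert g (A b)) ≤ V a (A b) + 1 := V_le hV a (A b) g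
      have h5 := henvy a b
      omega
    · rw [Function.update_of_ne hab, Function.update_of_ne hjb, hpf a hab, hpf j hjb]
      exact henvy a j

/-- Move G2: give `g` to an unblocked agent. -/
theorem moveG2 (hV : ∀ i S g, V i (insert g S) = V i S ∨ V i (insert g S) = V i S + 1)
    (hg : g ∉ G) (hsol : IsSol V G A T) {i : Fin n}
    (hnob : ∀ b, ¬(b ≠ i ∧ V b (A i) + pf T i = V b (A b) + pf T b ∧
      V b (insert g (A i)) = V b (A i) + 1)) :
    ∃ A' T', IsSol V (insert g G) A' T' := by
  classical
  obtain ⟨hdisj, hsub, hcov, henvy⟩ := hsol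
  obtain ⟨h1, h2, h3⟩ := update_struct hg hdisj hsub hcov i
  refine ⟨Function.update A i (insert g (A i)), T, h1, h2, h3, ?_⟩
  intro a j
  by_cases hai : a = i
  · rw [hai]
    by_cases hji : j = i
    · rw [hji]
    · rw [Function.update_self, Function.update_of_ne hji]
      have h4 := henvy i j
      have h5 : V i (A i) ≤ V i (insert g (A i)) := V_mono hV i (A i) g
      omega
  · by_cases hji : j = i
    · rw [hji, Function.update_self, Function.update_of_ne hai]
      rcases hV a (A i) g with h | h
      · rw [h]; exact henvy a i
      · have hne : V a (A i) + pf T i ≠ V a (A a) + pf T a := by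
          intro hteq
          exact hnob a ⟨hai, hteq, h⟩
        have hlt := lt_of_le_of_ne (henvy a i) hne
        omega
    · rw [Function.update_of_ne hai, Function.update_of_ne hji]
      exact henvy a j


/-- the tight relation: `a` is envy-tight towards `b`'s pair -/
def tr (V : Fin n → Finset (Fin m) → ℕ) (A : Fin n → Finset (Fin m)) (T : Finset (Fin n))
    (a b : Fin n) : Prop :=
  V a (A b) + pf T b = V a (A a) + pf T a


variable {V : Fin n → Finset (Fin m) → ℕ} {G : Finset (Fin m)}
  {A : Fin n → Finset (Fin m)} {T : Finset (Fin n)} {g : Fin m}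

/-- Claim A: in a subsidy-maximal solution, every unsubsidized agent is tight-reachable
from a subsidized agent. -/
theorem claimA (hsol : IsSol V G A T)
    (hmax : ∀ A' T', IsSol V G A' T' → T'.card ≤ T.card) :
    ∀ j, j ∉ T → ∃ k, k ∈ T ∧ Relation.ReflTransGen (tr V A T) k j := by
  classical
  by_contra hS
  push_neg at hS
  obtain ⟨j₀, hj₀T, hj₀⟩ := hS
  set S : Finset (Fin n) :=
    univ.filter (fun j => j ∉ T ∧ ∀ k, k ∈ T → ¬ Relation.ReflTransGen (tr V A T) k j)
    with hSdef
  have hj₀S : j₀ ∈ S := by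
    rw [hSdef, mem_filter]
    exact ⟨mem_univ _, hj₀T, fun k hk hr => hj₀ k hk hr⟩
  have hSnT : ∀ y, y ∈ S → y ∉ T := fun y hy => ((mem_filter.mp hy).2).1
  -- no tight edge from outside S into S
  have hedge : ∀ x σ, σ ∈ S → x ∉ S → ¬ tr V A T x σ := by
    intro x σ hσ hx htr
    by_cases hxT : x ∈ T
    · exact ((mem_filter.mp hσ).2).2 x hxT (Relation.ReflTransGen.single htr)
    · have hx' : ∃ k, k ∈ T ∧ Relation.ReflTransGen (tr V A T) k x := by
        by_contra hc
        push_neg at hc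
        exact hx (mem_filter.mpr ⟨mem_univ _, hxT, hc⟩)
      obtain ⟨k, hk, hreach⟩ := hx'
      exact ((mem_filter.mp hσ).2).2 k hk (hreach.tail htr)
  -- raising S gives a better solution
  obtain ⟨hdisj, hsub, hcov, henvy⟩ := hsol
  have hpf' : ∀ y, pf (T ∪ S) y = pf T y + (if y ∈ S then 1 else 0) := by
    intro y
    by_cases hy : y ∈ S
    · have : y ∉ T := hSnT y hy
      simp [pf, hy, this]
    · by_cases hyT : y ∈ T <;> simp [pf, hy, hyT]
  have hsol' : IsSol V G A (T ∪ S) := by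
    refine ⟨hdisj, hsub, hcov, ?_⟩
    intro x σ
    rw [hpf' x, hpf' σ]
    by_cases hσS : σ ∈ S
    · by_cases hxS : x ∈ S
      · have := henvy x σ; simp [hσS, hxS]; omega
      · have hnt := hedge x σ hσS hxS
        have hlt : V x (A σ) + pf T σ < V x (A x) + pf T x :=
          lt_of_le_of_ne (henvy x σ) hnt
        simp [hσS, hxS]; omega
    · have := henvy x σ
      by_cases hxS : x ∈ S <;> simp [hσS, hxS] <;> omega
  have hcard := hmax A (T ∪ S) hsol'
  have hdisjTS : Disjoint T S := by
    rw [Finset.disjoint_right]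
    exact fun y hy => hSnT y hy
  rw [Finset.card_union_of_disjoint hdisjTS] at hcard
  have hSpos : 0 < S.card := Finset.card_pos.mpr ⟨j₀, hj₀S⟩
  omega


/-- rotating pairs along a tight cycle -/
theorem rotate (hsol : IsSol V G A T) {k b : Fin n}
    (hreach : Relation.ReflTransGen (tr V A T) k b) (hkb : k ≠ b)
    (htbk : tr V A T b k) :
    ∃ A' T', IsSol V G A' T' ∧ A' b = A k ∧ (b ∈ T' ↔ k ∈ T) := by
  classical
  obtain ⟨l, hlne, hchain, hnodup, hlast⟩ := exists_nodup_chain (tr V A T) hreach hkb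
  set L : List (Fin n) := k :: l with hLdef
  set π : Equiv.Perm (Fin n) := L.formPerm with hπdef
  obtain ⟨hdisj, hsub, hcov, henvy⟩ := hsol
  have hLlen : L.length = l.length + 1 := by simp [hLdef]
  -- the key invariance property
  have hu : ∀ x, V x (A (π x)) + pf T (π x) = V x (A x) + pf T x := by
    intro x
    by_cases hx : x ∈ L
    · obtain ⟨i, hi, hxi⟩ := List.getElem_of_mem hx
      rw [← hxi, hπdef, List.formPerm_apply_getElem L hnodup i hi]
      by_cases hii : i + 1 < L.length
      · simp only [Nat.mod_eq_of_lt hii]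
        -- tr L[i] L[i+1]
        have hchain' : (∀ h : 0 < l.length, tr V A T k (l.get ⟨0, h⟩)) ∧
            ∀ (i : ℕ) (h : i < l.length - 1),
              tr V A T (l.get ⟨i, by omega⟩) (l.get ⟨i + 1, by omega⟩) := by
          have H := List.isChain_iff_getElem.mp (show List.IsChain (tr V A T) (k :: l) from hchain)
          exact ⟨fun h => H 0 (by simp; omega), fun i h => H (i + 1) (by simp; omega)⟩
        rcases Nat.eq_zero_or_pos i with rfl | hipos
        · have h0 : 0 < l.length := by omega
          have := hchain'.1 h0
          simp only [List.get_eq_getElem] at this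
          have e1 : L[0] = k := rfl
          have e2 : L[0+1] = l[0] := rfl
          rw [e1, e2]
          exact this
        · obtain ⟨j, rfl⟩ : ∃ j, i = j + 1 := ⟨i - 1, by omega⟩
          have hjlt : j < l.length - 1 := by omega
          have := hchain'.2 j hjlt
          simp only [List.get_eq_getElem] at this
          have e1 : L[j+1] = l[j]'(by omega) := rfl
          have e2 : L[j+1+1] = l[j+1]'(by omega) := rfl
          rw [e1, e2]
          exact this
      · have hieq : i = L.length - 1 := by omega
        subst hieq
        have hmod : (L.length - 1 + 1) % L.length = 0 := by
          have : L.length - 1 + 1 = L.length := by omega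
          rw [this, Nat.mod_self]
        simp only [hmod]
        have e0 : L[0] = k := rfl
        have eb : L[L.length - 1]'(by omega) = b := by
          rw [← List.getLast_eq_getElem (l := L) (List.cons_ne_nil _ _)]
          exact hlast
        rw [e0, eb]
        exact htbk
    · rw [hπdef, List.formPerm_apply_of_notMem hx]
  have hπb : π b = k := by
    rw [hπdef, ← hlast]
    exact List.formPerm_apply_getLast k l
  refine ⟨fun i => A (π i), univ.filter (fun i => π i ∈ T), ⟨?_, ?_, ?_, ?_⟩, ?_, ?_⟩
  · intro i j hij
    exact hdisj _ _ (fun h => hij (π.injective h))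
  · intro i; exact hsub _
  · intro x hx
    obtain ⟨i, hi⟩ := hcov x hx
    refine ⟨π.symm i, ?_⟩
    show x ∈ A (π (π.symm i))
    rw [Equiv.apply_symm_apply]
    exact hi
  · intro i j
    have hpfT' : ∀ y, pf (univ.filter (fun i => π i ∈ T)) y = pf T (π y) := by
      intro y; simp [pf, mem_filter]
    rw [hpfT' i, hpfT' j, hu i]
    exact henvy i (π j)
  · show A (π b) = A k
    rw [hπb]
  · simp [mem_filter, hπb]

theorem main (hn : 0 < n)
    (hV : ∀ (i : Fin n) (S : Finset (Fin m)) (g : Fin m),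
      V i (insert g S) = V i S ∨ V i (insert g S) = V i S + 1) :
    ∀ G : Finset (Fin m), ∃ A T, IsSol V G A T := by
  classical
  intro G
  induction G using Finset.induction_on with
  | empty =>
    refine ⟨fun _ => ∅, ∅, fun i j _ => Finset.disjoint_empty_left _,
      fun i => Finset.Subset.refl _, fun x hx => absurd hx (Finset.notMem_empty x),
      fun i j => le_refl _⟩
  | @insert g G hg ih =>
    obtain ⟨A₀, T₀, h₀⟩ := ih
    have hcard₀ : T₀.card ≤ n := le_trans (Finset.card_le_univ T₀) (by simp)
    set Pc : ℕ → Prop := fun c => ∃ A T, IsSol V G A T ∧ T.card = c with hPcdef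
    haveI : DecidablePred Pc := Classical.decPred _
    have hP₀ : Pc T₀.card := ⟨A₀, T₀, h₀, rfl⟩
    have hspec : Pc (Nat.findGreatest Pc n) := Nat.findGreatest_spec hcard₀ hP₀
    obtain ⟨A, T, hsol, hTcard⟩ := hspec
    have hmax : ∀ A' T', IsSol V G A' T' → T'.card ≤ T.card := by
      intro A' T' h'
      rw [hTcard]
      have hP' : Pc T'.card := ⟨A', T', h', rfl⟩
      exact Nat.le_findGreatest (le_trans (Finset.card_le_univ T') (by simp)) hP'
    by_cases hI : ∃ i, ∀ b, ¬(b ≠ i ∧ tr V A T b i ∧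
        V b (insert g (A i)) = V b (A i) + 1)
    · obtain ⟨i, hi⟩ := hI
      exact moveG2 hV hg hsol (fun b hc => hi b ⟨hc.1, hc.2.1, hc.2.2⟩)
    · push_neg at hI
      have hmaxr := claimA hsol hmax
      set B : Fin n → Fin n := fun i => (hI i).choose with hBdef
      have hBspec : ∀ i : Fin n, B i ≠ i ∧ tr V A T (B i) i ∧
          V (B i) (insert g (A i)) = V (B i) (A i) + 1 := fun i => (hI i).choose_spec
      have hfex : ∀ k : Fin n, ∃ k', k' ∈ T ∧ Relation.ReflTransGen (tr V A T) k' (B k) := by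
        intro k
        by_cases h : B k ∈ T
        · exact ⟨B k, h, Relation.ReflTransGen.refl⟩
        · exact hmaxr (B k) h
      set f : Fin n → Fin n := fun k => (hfex k).choose with hfdef
      have hf : ∀ k, f k ∈ T ∧ Relation.ReflTransGen (tr V A T) (f k) (B k) :=
        fun k => (hfex k).choose_spec
      have hk₀ex : ∃ k₀, k₀ ∈ T := by
        by_cases h : (⟨0, hn⟩ : Fin n) ∈ T
        · exact ⟨_, h⟩
        · obtain ⟨k, hk, _⟩ := hmaxr _ h
          exact ⟨k, hk⟩
      obtain ⟨k₀, hk₀T⟩ := hk₀ex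
      set seq : ℕ → Fin n := fun t => f^[t] k₀ with hseqdef
      have hseqsucc : ∀ t, seq (t+1) = f (seq t) := fun t =>
        Function.iterate_succ_apply' f t k₀
      have hseqT : ∀ t, seq t ∈ T := by
        intro t
        induction t with
        | zero => exact hk₀T
        | succ t iht => rw [hseqsucc]; exact (hf (seq t)).1
      have hstep : ∀ t, Relation.ReflTransGen (tr V A T) (seq (t+1)) (seq t) := by
        intro t
        rw [hseqsucc]
        exact ((hf (seq t)).2).tail ((hBspec (seq t)).2.1)
      have hdesc : ∀ t d, Relation.ReflTransGen (tr V A T) (seq (t + d)) (seq t) := by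
        intro t d
        induction d with
        | zero => exact Relation.ReflTransGen.refl
        | succ d ihd => exact (hstep (t + d)).trans ihd
      obtain ⟨t1, t2, hne, heq⟩ := Finite.exists_ne_map_eq_of_infinite seq
      have hkey : ∀ a c : ℕ, a < c → seq a = seq c →
          ∃ k, k ∈ T ∧ Relation.ReflTransGen (tr V A T) k (B k) := by
        intro a c hac hseq
        refine ⟨seq a, hseqT a, ?_⟩
        have h1 : Relation.ReflTransGen (tr V A T) (seq c) (seq (a+1)) := by
          obtain ⟨d, rfl⟩ : ∃ d, c = (a+1) + d := ⟨c - (a+1), by omega⟩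
          exact hdesc (a+1) d
        have h2 : Relation.ReflTransGen (tr V A T) (seq (a+1)) (B (seq a)) := by
          rw [hseqsucc]; exact (hf (seq a)).2
        have h2' : Relation.ReflTransGen (tr V A T) (seq (a+1)) (B (seq c)) := by
          rw [← hseq]; exact h2
        have h3 := h1.trans h2'
        rw [hseq]
        exact h3
      have hkex : ∃ k, k ∈ T ∧ Relation.ReflTransGen (tr V A T) k (B k) := by
        rcases lt_or_gt_of_ne hne with h | h
        · exact hkey t1 t2 h heq
        · exact hkey t2 t1 h heq.symm
      obtain ⟨k, hkT, hreach⟩ := hkex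
      have hbk := hBspec k
      have hkb : k ≠ B k := Ne.symm hbk.1
      obtain ⟨A', T', hsol', hA'b, hT'b⟩ := rotate hsol hreach hkb hbk.2.1
      have hbT' : B k ∈ T' := hT'b.mpr hkT
      have hmarg' : V (B k) (insert g (A' (B k))) = V (B k) (A' (B k)) + 1 := by
        rw [hA'b]; exact hbk.2.2
      exact moveG1 hV hg hsol' hbT' hmarg'



end EFSaux2



/-- Main theorem: Under dichotomous valuations, every fair division
instance with `n ≥ 1` agents and `m` goods admits a complete allocation `A` and a
subsidy vector `p ∈ {0,1}^n` such that `(A, p)` is an envy-free solution. -/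
theorem exists_envy_free_solution_binary_subsidies {n m : ℕ} (hn : 0 < n)
    (v : Fin n → Finset (Fin m) → ℝ)
    (hempty : ∀ i, v i ∅ = 0)
    (hdich : ∀ i (S : Finset (Fin m)) (g : Fin m),
        v i (insert g S) - v i S = 0 ∨ v i (insert g S) - v i S = 1) :
    ∃ (A : Fin n → Finset (Fin m)) (p : Fin n → ℝ),
      (∀ i j, i ≠ j → Disjoint (A i) (A j)) ∧
      (∀ g : Fin m, ∃ i, g ∈ A i) ∧
      (∀ i, p i = 0 ∨ p i = 1) ∧
      (∀ i j, v i (A j) + p j ≤ v i (A i) + p i) := by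
  classical
  have hnat : ∀ i (S : Finset (Fin m)), ∃ k : ℕ, v i S = k := by
    intro i S
    induction S using Finset.induction_on with
    | empty => exact ⟨0, by simpa using hempty i⟩
    | @insert g S hg ihS =>
      obtain ⟨k, hk⟩ := ihS
      rcases hdich i S g with h | h
      · exact ⟨k, by rw [← hk]; linarith⟩
      · exact ⟨k + 1, by push_cast; rw [← hk]; linarith⟩
  choose V hVv using hnat
  have hV : ∀ (i : Fin n) (S : Finset (Fin m)) (g : Fin m),
      V i (insert g S) = V i S ∨ V i (insert g S) = V i S + 1 := by
    intro i S g
    rcases hdich i S g with h | h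
    · left
      have : ((V i (insert g S) : ℕ) : ℝ) = ((V i S : ℕ) : ℝ) := by
        rw [← hVv, ← hVv]; linarith
      exact_mod_cast this
    · right
      have : ((V i (insert g S) : ℕ) : ℝ) = ((V i S : ℕ) : ℝ) + 1 := by
        rw [← hVv, ← hVv]; linarith
      exact_mod_cast this
  obtain ⟨A, T, hdisj, _, hcov, henvy⟩ := EFSaux2.main hn hV Finset.univ
  refine ⟨A, fun i => if i ∈ T then 1 else 0, hdisj,
    fun x => hcov x (Finset.mem_univ x), fun i => by by_cases h : i ∈ T <;> simp [h], ?_⟩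
  intro i j
  have h := henvy i j
  have hpf : ∀ y : Fin n, ((EFSaux2.pf T y : ℕ) : ℝ) = if y ∈ T then (1:ℝ) else 0 := by
    intro y
    by_cases hy : y ∈ T <;> simp [EFSaux2.pf, hy]
  have hcast : ((V i (A j) + EFSaux2.pf T j : ℕ) : ℝ) ≤ ((V i (A i) + EFSaux2.pf T i : ℕ) : ℝ) := by
    exact_mod_cast h
  push_cast at hcast
  rw [hpf, hpf] at hcast
  rw [hVv, hVv]
  exact hcast
end

section
/- The bound n − 1 on the total subsidy is tight: in the instance with n agents, a single good g, and each agent's valuation v_i(S) = 1 if g ∈ S and 0 otherwise, every envy-free solution (A, p) with a complete allocation satisfies ∑_{i=1}^n p_i ≥ n − 1. -/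
/-! Let `w` receive the good. Every other agent values `w`'s bundle at `1` and its own at `0`,
so envy-freeness forces its subsidy up to at least `p w + 1 ≥ 1`; summing over the `n - 1`
losers gives the bound. -/

open Finset

theorem card_sub_one_le_sum_of_one_le_of_ne {ι : Type*} [Fintype ι] [DecidableEq ι]
    {p : ι → ℝ} (w : ι) (hw : 0 ≤ p w) (h : ∀ i, i ≠ w → 1 ≤ p i) :
    (Fintype.card ι : ℝ) - 1 ≤ ∑ i, p i := by
  have hrest : (#(univ.erase w) : ℝ) ≤ ∑ i ∈ univ.erase w, p i := by
    simpa only [nsmul_one] using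
      card_nsmul_le_sum (univ.erase w) p 1 fun i hi => h i (ne_of_mem_erase hi)
  rw [card_erase_of_mem (mem_univ w), card_univ,
    Nat.cast_pred (Fintype.card_pos_iff.mpr ⟨w⟩)] at hrest
  rw [← add_sum_erase _ _ (mem_univ w)]
  linarith

theorem total_subsidy_lower_bound_general {n : ℕ}
    (v : Fin n → Finset (Fin 1) → ℝ)
    (hv : ∀ i S, v i S = if (0 : Fin 1) ∈ S then 1 else 0)
    (A : Fin n → Finset (Fin 1))
    (hdisj : ∀ i j, i ≠ j → Disjoint (A i) (A j))
    (hcomplete : ∀ g : Fin 1, ∃ i, g ∈ A i)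
    (p : Fin n → ℝ) (hp : ∀ i, 0 ≤ p i)
    (hEF : ∀ i j, v i (A j) + p j ≤ v i (A i) + p i) :
    (n : ℝ) - 1 ≤ ∑ i, p i := by
  obtain ⟨w, hw⟩ := hcomplete 0
  have hloser : ∀ i, i ≠ w → (0 : Fin 1) ∉ A i := fun i hi h =>
    disjoint_left.mp (hdisj i w hi) h hw
  have hsubsidy : ∀ i, i ≠ w → 1 ≤ p i := by
    intro i hi
    have henvy := hEF i w
    rw [hv, hv, if_pos hw, if_neg (hloser i hi)] at henvy
    linarith [hp w]
  simpa using card_sub_one_le_sum_of_one_le_of_ne w (hp w) hsubsidy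

/-- Tightness: In the instance with `n` agents and a single good,
where each agent values a bundle `1` if it contains the good and `0` otherwise,
every envy-free solution `(A, p)` with a complete allocation requires total
subsidy at least `n - 1`. -/
theorem total_subsidy_lower_bound {n : ℕ} (hn : 1 ≤ n)
    (v : Fin n → Finset (Fin 1) → ℝ)
    (hv : ∀ i S, v i S = if (0 : Fin 1) ∈ S then 1 else 0)
    (A : Fin n → Finset (Fin 1))
    (hdisj : ∀ i j, i ≠ j → Disjoint (A i) (A j))
    (hcomplete : ∀ g : Fin 1, ∃ i, g ∈ A i)
    (p : Fin n → ℝ) (hp : ∀ i, 0 ≤ p i)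
    (hEF : ∀ i j, v i (A j) + p j ≤ v i (A i) + p i) :
    (n : ℝ) - 1 ≤ ∑ i, p i :=
  total_subsidy_lower_bound_general v hv A hdisj hcomplete p hp hEF
end

section
/- Under dichotomous valuations, if A is an envy-freeable allocation, B = A_σ for some permutation σ is an allocation with the same social welfare (∑_i v_i(B_i) = ∑_i v_i(A_i)), g is an unallocated good, and agent k satisfies v_k(B_k ∪ {g}) ≥ v_k(B_k) + 1, then B is envy-freeable and the allocation (B_1, ..., B_k ∪ {g}, ..., B_n) achieves the maximum social welfare ∑_i v_i(A_i) + 1 among all allocations obtained by reassigning its bundles. -/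
/-!
Reassigning the bundles of a welfare-maximizing allocation `A` by `τ` after `σ` is the
reassignment `σ ∘ τ` of `A`, so `B = A_σ`, having the welfare of `A`, is welfare-maximizing too.
Giving `g` to agent `k` raises the welfare of `B` by exactly `1`, while in any reassignment of the
augmented bundles only the agent receiving `B k ∪ {g}` can gain, and under dichotomous valuations
by at most `1`; so no reassignment beats the augmented allocation.
-/

open Finset

section Reassignment

variable {ι α : Type*} [Fintype ι] (v : ι → α → ℝ)

theorem sum_comp_perm_le_of_sum_comp_perm_eq {A : ι → α}
    (hA : ∀ τ : Equiv.Perm ι, ∑ i, v i (A (τ i)) ≤ ∑ i, v i (A i))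
    {σ : Equiv.Perm ι} (hσ : ∑ i, v i (A (σ i)) = ∑ i, v i (A i)) (τ : Equiv.Perm ι) :
    ∑ i, v i (A (σ (τ i))) ≤ ∑ i, v i (A (σ i)) :=
  hσ ▸ hA (τ.trans σ)

variable [DecidableEq ι]

theorem sum_apply_update (B : ι → α) (k : ι) (S : α) :
    ∑ i, v i (Function.update B k S i) = ∑ i, v i (B i) + (v k S - v k (B k)) := by
  simp only [Function.apply_update v B k S]
  rw [sum_update_of_mem (mem_univ k), sdiff_singleton_eq_erase,
    ← add_sum_erase univ (fun i => v i (B i)) (mem_univ k)]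
  ring

theorem sum_apply_update_comp_perm (B : ι → α) (k : ι) (S : α) (τ : Equiv.Perm ι) :
    ∑ i, v i (Function.update B k S (τ i)) =
      ∑ i, v i (B (τ i)) + (v (τ.symm k) S - v (τ.symm k) (B k)) := by
  have h := sum_apply_update v (B ∘ τ) (τ.symm k) S
  rwa [← Function.update_comp_equiv, Function.comp_apply, τ.apply_symm_apply] at h

end Reassignment

theorem augmented_allocation_welfare_maximal_general {n m : ℕ}
    (v : Fin n → Finset (Fin m) → ℝ)
    (hdich : ∀ i (S : Finset (Fin m)) (g : Fin m),
        v i (insert g S) - v i S = 0 ∨ v i (insert g S) - v i S = 1)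
    (A : Fin n → Finset (Fin m))
    (hAfreeable : ∀ τ : Equiv.Perm (Fin n),
        ∑ i, v i (A (τ i)) ≤ ∑ i, v i (A i))
    (σ : Equiv.Perm (Fin n))
    (B : Fin n → Finset (Fin m)) (hB : B = fun i => A (σ i))
    (hsw : ∑ i, v i (B i) = ∑ i, v i (A i))
    (g : Fin m)
    (k : Fin n) (hk : v k (B k) + 1 ≤ v k (insert g (B k))) :
    (∀ τ : Equiv.Perm (Fin n), ∑ i, v i (B (τ i)) ≤ ∑ i, v i (B i)) ∧
    (∑ i, v i (Function.update B k (insert g (B k)) i) = ∑ i, v i (A i) + 1) ∧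
    (∀ τ : Equiv.Perm (Fin n),
        ∑ i, v i (Function.update B k (insert g (B k)) (τ i)) ≤
          ∑ i, v i (Function.update B k (insert g (B k)) i)) := by
  have hBfreeable : ∀ τ : Equiv.Perm (Fin n), ∑ i, v i (B (τ i)) ≤ ∑ i, v i (B i) := by
    subst hB
    exact sum_comp_perm_le_of_sum_comp_perm_eq v hAfreeable hsw
  have hmarg : v k (insert g (B k)) - v k (B k) = 1 := by
    rcases hdich k (B k) g with h | h <;> linarith
  have hwelfare : ∑ i, v i (Function.update B k (insert g (B k)) i) = ∑ i, v i (A i) + 1 := by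
    rw [sum_apply_update, hmarg, hsw]
  refine ⟨hBfreeable, hwelfare, fun τ => ?_⟩
  have hgain : v (τ.symm k) (insert g (B k)) - v (τ.symm k) (B k) ≤ 1 := by
    rcases hdich (τ.symm k) (B k) g with h | h <;> linarith
  rw [sum_apply_update_comp_perm, hwelfare, ← hsw]
  linarith [hBfreeable τ]

/-- Under dichotomous valuations, if `A` is envy-freeable (welfare
maximizing over reassignments of its bundles), `B = A_σ` has the same social
welfare as `A`, `g` is an unallocated good, and agent `k` has marginal value at
least `1` for `g` relative to `B k`, then `B` is envy-freeable and the allocation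
obtained from `B` by adding `g` to `B k` has social welfare `∑ i, v i (A i) + 1`,
which is maximal among all reassignments of its bundles. -/
theorem augmented_allocation_welfare_maximal {n m : ℕ}
    (v : Fin n → Finset (Fin m) → ℝ)
    (hempty : ∀ i, v i ∅ = 0)
    (hdich : ∀ i (S : Finset (Fin m)) (g : Fin m),
        v i (insert g S) - v i S = 0 ∨ v i (insert g S) - v i S = 1)
    (A : Fin n → Finset (Fin m))
    (hdisj : ∀ i j, i ≠ j → Disjoint (A i) (A j))
    (hAfreeable : ∀ τ : Equiv.Perm (Fin n),
        ∑ i, v i (A (τ i)) ≤ ∑ i, v i (A i))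
    (σ : Equiv.Perm (Fin n))
    (B : Fin n → Finset (Fin m)) (hB : B = fun i => A (σ i))
    (hsw : ∑ i, v i (B i) = ∑ i, v i (A i))
    (g : Fin m) (hg : ∀ i, g ∉ A i)
    (k : Fin n) (hk : v k (B k) + 1 ≤ v k (insert g (B k))) :
    (∀ τ : Equiv.Perm (Fin n), ∑ i, v i (B (τ i)) ≤ ∑ i, v i (B i)) ∧
    (∑ i, v i (Function.update B k (insert g (B k)) i) = ∑ i, v i (A i) + 1) ∧
    (∀ τ : Equiv.Perm (Fin n),
        ∑ i, v i (Function.update B k (insert g (B k)) (τ i)) ≤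
          ∑ i, v i (Function.update B k (insert g (B k)) i)) :=
  augmented_allocation_welfare_maximal_general v hdich A hAfreeable σ B hB hsw g k hk
end
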